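/- arXiv:1801.09516 — 7 statements merged into one kernel-verified Lean document; each statement's English description precedes it below -/
import Mathlib

section
/- For positive integers n ≥ 1 and 0 ≤ d ≤ n, the number of binary necklaces of length n and density d (i.e., lexicographically least representatives of rotation classes of binary words of length n containing exactly d ones) equals (1/n) · Σ_{j | gcd(n,d)} φ(j) · C(n/j, d/j), where φ is Euler's totient function. -/
/-- `w` is a necklace: lexicographically ≤ all of its rotations. -/
def IsNecklace (w : List ℕ) : Prop := ∀ i : ℕ, w ≤ w.rotate i

/-- `w` is a Lyndon word: nonempty and strictly smaller than all nontrivial rotations. -/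
def IsLyndon (w : List ℕ) : Prop :=
  w ≠ [] ∧ ∀ i : ℕ, 0 < i → i < w.length → w < w.rotate i

/-- `w` is a prenecklace over the alphabet `{0,…,k-1}`. -/
def IsPrenecklace (k : ℕ) (w : List ℕ) : Prop :=
  ∃ v : List ℕ, w <+: v ∧ (∀ a ∈ v, a < k) ∧ IsNecklace v

/-- Length of the longest prefix of `w` that is a Lyndon word. -/
noncomputable def lyn (w : List ℕ) : ℕ :=
  sSup {p | p ≤ w.length ∧ IsLyndon (w.take p)}

/-- Number of binary necklaces of length `n` and density `d`. -/
noncomputable def N (n d : ℕ) : ℕ :=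
  {w : List ℕ | w.length = n ∧ (∀ a ∈ w, a < 2) ∧ w.count 1 = d ∧ IsNecklace w}.ncard

/-- Number of binary Lyndon words of length `n` and density `d`. -/
noncomputable def L (n d : ℕ) : ℕ :=
  {w : List ℕ | w.length = n ∧ (∀ a ∈ w, a < 2) ∧ w.count 1 = d ∧ IsLyndon w}.ncard

/-- Number of necklaces over `{0,…,k-1}` with content `c`. -/
noncomputable def Nk (k : ℕ) (c : Fin k → ℕ) : ℕ :=
  {w : List ℕ | (∀ a ∈ w, a < k) ∧ (∀ i : Fin k, w.count i.val = c i) ∧ IsNecklace w}.ncard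

/-- Number of Lyndon words over `{0,…,k-1}` with content `c`. -/
noncomputable def Lk (k : ℕ) (c : Fin k → ℕ) : ℕ :=
  {w : List ℕ | (∀ a ∈ w, a < k) ∧ (∀ i : Fin k, w.count i.val = c i) ∧ IsLyndon w}.ncard

/-!
Burnside's lemma for the rotation action of `Fin n` on the binary words of length `n` and
density `d`. Each orbit contains exactly one necklace, its lexicographically least rotation.
A word is fixed by the rotation by `i` iff it is fixed by the rotation by `gcd n i`, and the
words fixed by the rotation by `n / j` are the `j`-fold repetitions of a word of length `n / j`
and density `d / j`; there are `C(n/j, d/j)` of them if `j ∣ d` and none otherwise. Exactly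
`φ j` residues `i` modulo `n` have `gcd n i = n / j`, which gives the formula.
-/

open Finset

namespace List

variable {α : Type*}

theorem rotate_mul_eq_self {l : List α} {i : ℕ} (h : l.rotate i = l) (k : ℕ) :
    l.rotate (k * i) = l := by
  induction k with
  | zero => simp
  | succ k ih => rw [Nat.succ_mul, ← rotate_rotate, ih, h]

theorem rotate_gcd_length_eq_self_iff {l : List α} {i : ℕ} :
    l.rotate (l.length.gcd i) = l ↔ l.rotate i = l := by
  refine ⟨fun h => ?_, fun h => ?_⟩
  · obtain ⟨k, hk⟩ := Nat.gcd_dvd_right l.length i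
    rw [hk, mul_comm]
    exact rotate_mul_eq_self h k
  rcases l.length.eq_zero_or_pos with h0 | hpos
  · simp [length_eq_zero_iff.mp h0]
  rcases (Nat.gcd_le_left i hpos).lt_or_eq with hlt | heq
  · obtain ⟨m, -, hm⟩ :=
      Nat.exists_mul_mod_eq_gcd (n := i) (k := l.length) (by rwa [Nat.gcd_comm])
    rw [Nat.gcd_comm, ← hm, rotate_mod, mul_comm]
    exact rotate_mul_eq_self h m
  · rw [heq, rotate_length]

theorem rotate_flatten_replicate (m : ℕ) (u : List α) :
    (replicate m u).flatten.rotate u.length = (replicate m u).flatten := by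
  cases m with
  | zero => simp
  | succ m =>
    conv_lhs => rw [replicate_succ, flatten_cons, rotate_append_length_eq]
    rw [← flatten_concat, ← replicate_succ']

theorem eq_flatten_replicate_of_append_comm {u v : List α} {m : ℕ}
    (hlen : v.length = m * u.length) (h : u ++ v = v ++ u) : v = (replicate m u).flatten := by
  induction m generalizing v with
  | zero => simpa using hlen
  | succ m ih =>
    obtain ⟨hu, hv⟩ : u = v.take u.length ∧ v = v.drop u.length ++ u := by
      refine append_inj (h.trans ?_) (by simp [hlen, Nat.succ_mul])
      rw [← append_assoc, take_append_drop]
    have hcomm : u ++ v.drop u.length = v.drop u.length ++ u := by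
      refine append_cancel_right (bs := u) ?_
      rw [append_assoc, ← hv]
      exact h
    calc v = v.take u.length ++ v.drop u.length := (take_append_drop _ _).symm
      _ = (replicate (m + 1) u).flatten := by
        rw [← hu, ih (by simp [hlen, Nat.succ_mul]) hcomm, replicate_succ, flatten_cons]

theorem eq_flatten_replicate_of_rotate_eq_self {l : List α} {j g : ℕ} (hj : 0 < j)
    (hl : l.length = j * g) (h : l.rotate g = l) : l = (replicate j (l.take g)).flatten := by
  have hg : g ≤ l.length := by rw [hl]; exact Nat.le_mul_of_pos_left g hj
  have hcomm : l.take g ++ l.drop g = l.drop g ++ l.take g := by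
    rw [take_append_drop, ← rotate_eq_drop_append_take hg, h]
  obtain ⟨k, rfl⟩ := Nat.exists_eq_add_one.mpr hj
  rw [replicate_succ, flatten_cons, ← eq_flatten_replicate_of_append_comm _ hcomm,
    take_append_drop]
  simp [hl, Nat.succ_mul]

theorem rotate_mod_of_length_eq {l : List α} {n : ℕ} (hl : l.length = n) (k : ℕ) :
    l.rotate (k % n) = l.rotate k := by
  subst hl
  exact l.rotate_mod k

theorem count_flatten_replicate [BEq α] (j : ℕ) (u : List α) (a : α) :
    (replicate j u).flatten.count a = j * u.count a := by
  simp [count_flatten]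

theorem flatten_replicate_injective {j : ℕ} (hj : 0 < j) :
    Function.Injective fun u : List α => (replicate j u).flatten := by
  intro u v huv
  have hlen : u.length = v.length := by
    simpa [hj.ne'] using congrArg length huv
  obtain ⟨k, rfl⟩ := Nat.exists_eq_add_one.mpr hj
  simp only [replicate_succ, flatten_cons] at huv
  exact (append_inj huv hlen).1

theorem count_ofFn [DecidableEq α] {n : ℕ} (f : Fin n → α) (a : α) :
    (ofFn f).count a = #{i | f i = a} := by
  rw [← Multiset.coe_count, ← Fin.univ_val_map, Multiset.count_map]
  simp only [eq_comm]
  rfl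

end List

theorem IsNecklace.eq_of_isRotated {u v : List ℕ} (hu : IsNecklace u) (hv : IsNecklace v)
    (h : u ~r v) : u = v := by
  obtain ⟨i, rfl⟩ := h
  obtain ⟨j, hj⟩ := List.IsRotated.forall u i
  exact le_antisymm (hu i) ((hv j).trans_eq hj)

theorem exists_isRotated_isNecklace (w : List ℕ) : ∃ v, w ~r v ∧ IsNecklace v := by
  obtain ⟨v, hv, hmin⟩ := w.cyclicPermutations.toFinset.exists_min_image id
    ⟨w, List.mem_toFinset.mpr w.mem_cyclicPermutations_self⟩
  simp only [List.mem_toFinset, List.mem_cyclicPermutations_iff, id] at hv hmin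
  exact ⟨v, hv.symm, fun i => hmin _ ((List.IsRotated.forall v i).trans hv)⟩

theorem Nat.sum_range_comp_gcd {M : Type*} [AddCommMonoid M] (n : ℕ) (f : ℕ → M) :
    ∑ i ∈ range n, f (n.gcd i) = ∑ j ∈ n.divisors, (n / j).totient • f j := by
  rcases n.eq_zero_or_pos with rfl | hn
  · simp
  rw [← sum_fiberwise_of_maps_to' fun i _ => mem_divisors.mpr ⟨gcd_dvd_left n i, hn.ne'⟩]
  refine sum_congr rfl fun j hj => ?_
  rw [sum_const, totient_div_of_dvd (dvd_of_mem_divisors hj)]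

def binaryWords (n d : ℕ) : Finset (List ℕ) :=
  (powersetCard d (univ : Finset (Fin n))).image fun s =>
    List.ofFn fun i => if i ∈ s then 1 else 0

theorem card_binaryWords (n d : ℕ) : #(binaryWords n d) = n.choose d := by
  rw [binaryWords, card_image_of_injective, card_powersetCard, card_univ, Fintype.card_fin]
  intro s t hst
  ext i
  have := congrFun (List.ofFn_injective hst) i
  split_ifs at this <;> simp_all

theorem mem_binaryWords {n d : ℕ} {w : List ℕ} :
    w ∈ binaryWords n d ↔ w.length = n ∧ (∀ a ∈ w, a < 2) ∧ w.count 1 = d := by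
  simp only [binaryWords, mem_image, mem_powersetCard, subset_univ, true_and]
  constructor
  · rintro ⟨s, rfl, rfl⟩
    refine ⟨List.length_ofFn, fun a ha => ?_, ?_⟩
    · obtain ⟨i, rfl⟩ := List.mem_ofFn.mp ha
      split <;> omega
    · simp [List.count_ofFn]
  · rintro ⟨rfl, hbin, rfl⟩
    have hw : (List.ofFn fun i : Fin w.length => if w[i] = 1 then 1 else 0) = w := by
      refine List.ext_getElem (by simp) fun i _ hi => ?_
      have := hbin _ (List.getElem_mem hi)
      simp only [List.getElem_ofFn, Fin.getElem_fin]
      split <;> omega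
    refine ⟨univ.filter fun i : Fin w.length => w[i] = 1, ?_, ?_⟩
    · conv_rhs => rw [← hw]
      simp [List.count_ofFn]
    · simpa using hw

theorem rotate_mem_binaryWords {n d : ℕ} {w : List ℕ} (hw : w ∈ binaryWords n d) (i : ℕ) :
    w.rotate i ∈ binaryWords n d := by
  obtain ⟨hl, hbin, hc⟩ := mem_binaryWords.mp hw
  exact mem_binaryWords.mpr ⟨by rw [List.length_rotate, hl],
    fun a ha => hbin a (List.mem_rotate.mp ha), by rw [(List.rotate_perm w i).count_eq, hc]⟩

theorem flatten_replicate_mem_binaryWords_iff {j g e : ℕ} (hj : 0 < j) {u : List ℕ} :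
    (List.replicate j u).flatten ∈ binaryWords (j * g) (j * e) ↔ u ∈ binaryWords g e := by
  have hmem : ∀ a, a ∈ (List.replicate j u).flatten ↔ a ∈ u := fun a => by
    simp [List.mem_flatten, hj.ne']
  simp only [mem_binaryWords, List.length_flatten, List.map_replicate, List.sum_replicate,
    smul_eq_mul, List.count_flatten_replicate, hmem, Nat.mul_left_cancel_iff hj]

theorem dvd_of_flatten_replicate_mem_binaryWords {j n d : ℕ} {u : List ℕ}
    (h : (List.replicate j u).flatten ∈ binaryWords n d) : j ∣ d :=
  ⟨u.count 1, by rw [← (mem_binaryWords.mp h).2.2, List.count_flatten_replicate]⟩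

theorem filter_rotate_eq_self_binaryWords {j g e : ℕ} (hj : 0 < j) :
    {w ∈ binaryWords (j * g) (j * e) | w.rotate g = w} =
      (binaryWords g e).image fun u => (List.replicate j u).flatten := by
  ext w
  simp only [mem_filter, mem_image]
  constructor
  · rintro ⟨hw, hrot⟩
    have hperiodic :=
      List.eq_flatten_replicate_of_rotate_eq_self hj (mem_binaryWords.mp hw).1 hrot
    rw [hperiodic, flatten_replicate_mem_binaryWords_iff hj] at hw
    exact ⟨w.take g, hw, hperiodic.symm⟩
  · rintro ⟨u, hu, rfl⟩
    refine ⟨(flatten_replicate_mem_binaryWords_iff hj).mpr hu, ?_⟩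
    rw [← (mem_binaryWords.mp hu).1]
    exact List.rotate_flatten_replicate j u

theorem card_filter_rotate_eq_self_binaryWords {j g d : ℕ} (hj : 0 < j) :
    #{w ∈ binaryWords (j * g) d | w.rotate g = w} = if j ∣ d then g.choose (d / j) else 0 := by
  split_ifs with hjd
  · obtain ⟨e, rfl⟩ := hjd
    rw [filter_rotate_eq_self_binaryWords hj,
      card_image_of_injective _ (List.flatten_replicate_injective hj), card_binaryWords,
      Nat.mul_div_cancel_left e hj]
  · refine card_eq_zero.mpr (filter_eq_empty_iff.mpr fun w hw hrot => hjd ?_)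
    rw [List.eq_flatten_replicate_of_rotate_eq_self hj (mem_binaryWords.mp hw).1 hrot] at hw
    exact dvd_of_flatten_replicate_mem_binaryWords hw

theorem card_filter_rotate_gcd_eq_self_binaryWords (n d i : ℕ) :
    #{w ∈ binaryWords n d | w.rotate (n.gcd i) = w} =
      #{w ∈ binaryWords n d | w.rotate i = w} := by
  refine congrArg card (filter_congr fun w hw => ?_)
  rw [← (mem_binaryWords.mp hw).1]
  exact List.rotate_gcd_length_eq_self_iff

instance (n d : ℕ) [NeZero n] : AddAction (Fin n) (binaryWords n d) where
  vadd i w := ⟨w.1.rotate i, rotate_mem_binaryWords w.2 i⟩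
  zero_vadd w := Subtype.ext (List.rotate_zero w.1)
  add_vadd i k w := Subtype.ext <| by
    change w.1.rotate (i + k : Fin n) = (w.1.rotate k).rotate i
    rw [List.rotate_rotate, Fin.val_add, List.rotate_mod_of_length_eq (mem_binaryWords.mp w.2).1,
      add_comm]

theorem val_vadd_binaryWords {n d : ℕ} [NeZero n] (i : Fin n) (w : binaryWords n d) :
    (i +ᵥ w).1 = w.1.rotate i := rfl

theorem orbitRel_binaryWords_iff {n d : ℕ} [NeZero n] {v w : binaryWords n d} :
    AddAction.orbitRel (Fin n) (binaryWords n d) v w ↔ w.1 ~r v.1 := by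
  rw [AddAction.orbitRel_apply, AddAction.mem_orbit_iff]
  constructor
  · rintro ⟨i, rfl⟩
    exact ⟨i, rfl⟩
  · rintro ⟨k, hk⟩
    refine ⟨Fin.ofNat n k, Subtype.ext ?_⟩
    rw [val_vadd_binaryWords, Fin.val_ofNat,
      List.rotate_mod_of_length_eq (mem_binaryWords.mp w.2).1, hk]

theorem card_orbits_binaryWords (n d : ℕ) [NeZero n] :
    Nat.card (Quotient (AddAction.orbitRel (Fin n) (binaryWords n d))) = N n d := by
  rw [N, ← Nat.card_coe_set_eq]
  refine (Nat.card_eq_of_bijective (fun w =>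
    ⟦⟨w.1, mem_binaryWords.mpr ⟨w.2.1, w.2.2.1, w.2.2.2.1⟩⟩⟧) ⟨?_, ?_⟩).symm
  · intro v w h
    exact Subtype.ext <| v.2.2.2.2.eq_of_isRotated w.2.2.2.2
      (orbitRel_binaryWords_iff.mp (Quotient.exact h)).symm
  · rintro ⟨w⟩
    obtain ⟨v, hwv, hv⟩ := exists_isRotated_isNecklace w.1
    have hvmem : v ∈ binaryWords n d := by
      obtain ⟨k, rfl⟩ := hwv
      exact rotate_mem_binaryWords w.2 k
    obtain ⟨hl, hbin, hc⟩ := mem_binaryWords.mp hvmem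
    exact ⟨⟨v, hl, hbin, hc, hv⟩, Quotient.sound (orbitRel_binaryWords_iff.mpr hwv)⟩

theorem card_fixedBy_binaryWords {n d : ℕ} [NeZero n] (i : Fin n)
    [Fintype (AddAction.fixedBy (binaryWords n d) i)] :
    Fintype.card (AddAction.fixedBy (binaryWords n d) i) =
      #{w ∈ binaryWords n d | w.rotate i = w} := by
  rw [← Fintype.card_coe]
  exact Fintype.card_congr
    { toFun := fun w => ⟨w.1.1, mem_filter.mpr ⟨w.1.2, congrArg Subtype.val w.2⟩⟩
      invFun := fun w => ⟨⟨w.1, (mem_filter.mp w.2).1⟩, Subtype.ext (mem_filter.mp w.2).2⟩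
      left_inv := fun _ => rfl
      right_inv := fun _ => rfl }

theorem necklace_count_formula_general (n d : ℕ) (hn : 1 ≤ n) :
    n * N n d = ∑ j ∈ (Nat.gcd n d).divisors, Nat.totient j * Nat.choose (n / j) (d / j) := by
  classical
  have : NeZero n := ⟨by omega⟩
  let F (g : ℕ) : ℕ := #{w ∈ binaryWords n d | w.rotate g = w}
  have hF {j : ℕ} (hj : j ∈ n.divisors) :
      F (n / j) = if j ∣ d then (n / j).choose (d / j) else 0 := by
    have := card_filter_rotate_eq_self_binaryWords (g := n / j) (d := d)
      (Nat.pos_of_mem_divisors hj)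
    rwa [Nat.mul_div_cancel' (Nat.dvd_of_mem_divisors hj)] at this
  calc n * N n d
      = ∑ i : Fin n, Fintype.card (AddAction.fixedBy (binaryWords n d) i) := by
        rw [AddAction.sum_card_fixedBy_eq_card_orbits_mul_card_addGroup, Fintype.card_fin,
          ← Nat.card_eq_fintype_card, card_orbits_binaryWords, mul_comm]
    _ = ∑ i ∈ range n, F (n.gcd i) := by
        simp only [card_fixedBy_binaryWords]
        rw [Fin.sum_univ_eq_sum_range F n]
        exact sum_congr rfl fun i _ => (card_filter_rotate_gcd_eq_self_binaryWords n d i).symm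
    _ = ∑ j ∈ n.divisors, j.totient * F (n / j) := by
        rw [Nat.sum_range_comp_gcd, ← Nat.sum_div_divisors n fun j => (n / j).totient • F j]
        refine sum_congr rfl fun j hj => ?_
        rw [Nat.div_div_self (Nat.dvd_of_mem_divisors hj) (by omega), smul_eq_mul]
    _ = _ := by
        rw [← Nat.divisors_filter_dvd_of_dvd (by omega) (Nat.gcd_dvd_left n d), sum_filter]
        refine sum_congr rfl fun j hj => ?_
        simp only [hF hj, Nat.dvd_gcd_iff, Nat.dvd_of_mem_divisors hj, true_and, mul_ite, mul_zero]

/-- Enumeration formula for binary necklaces with fixed density. -/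
theorem necklace_count_formula (n d : ℕ) (hn : 1 ≤ n) (hd : d ≤ n) :
    n * N n d = ∑ j ∈ (Nat.gcd n d).divisors, Nat.totient j * Nat.choose (n / j) (d / j) :=
  necklace_count_formula_general n d hn
end

section
/- Let n ≥ 2, k ≥ 2, and let w = a_1⋯a_{n−1} be a prenecklace over the alphabet {0,…,k−1}. Let p = lyn(w) be the length of the longest prefix of w that is a Lyndon word, and let b ∈ {0,…,k−1}. Then wb is a prenecklace if and only if a_{n−p} ≤ b. -/
/-! Everything rests on one fact: if `u` is a necklace, the periodic word `u u u ⋯` is, letter by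
letter, at most each of its shifts, because `u` is at most each of its rotations.

Let `u` be the longest Lyndon prefix of a prenecklace `w`. Comparing each factor of `w` with the
prefix of `w` shows that `w` is a prefix of `u u u ⋯`: at the first position where `w` left this
periodic word its letter would be larger, and then that prefix of `w` would be a longer Lyndon
prefix. The letter `a_{n-p}` is the periodic letter due at position `n`. Appending exactly that
letter keeps `w b` a prefix of the necklace `u^T`, appending a larger one makes `w b` Lyndon, and
appending a smaller one breaks the comparison of the last period with the prefix. -/

namespace List

theorem lt_iff_exists_getD {x y : List ℕ} (h : x.length = y.length) :
    x < y ↔ ∃ j < x.length, (∀ t < j, x.getD t 0 = y.getD t 0) ∧ x.getD j 0 < y.getD j 0 := by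
  have hget : ∀ {t} (ht : t < x.length), x.getD t 0 = x[t] ∧ y.getD t 0 = y[t]'(h ▸ ht) :=
    fun ht => ⟨List.getD_eq_getElem _ _ ht, List.getD_eq_getElem _ _ _⟩
  rw [List.lt_iff_exists, or_iff_right fun hc => lt_irrefl _ (h ▸ hc.2)]
  constructor
  · rintro ⟨j, h₁, _, he, hlt⟩
    refine ⟨j, h₁, fun t ht => ?_, ?_⟩
    · rw [(hget (ht.trans h₁)).1, (hget (ht.trans h₁)).2]; exact he t ht
    · rw [(hget h₁).1, (hget h₁).2]; exact hlt
  · rintro ⟨j, h₁, he, hlt⟩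
    refine ⟨j, h₁, h ▸ h₁, fun t ht => ?_, ?_⟩
    · rw [← (hget (ht.trans h₁)).1, ← (hget (ht.trans h₁)).2]; exact he t ht
    · rw [← (hget h₁).1, ← (hget h₁).2]; exact hlt

theorem getD_le_getD_of_le {x y : List ℕ} (h : x.length = y.length) (hxy : x ≤ y) {j : ℕ}
    (hj : j < x.length) (he : ∀ t < j, x.getD t 0 = y.getD t 0) : x.getD j 0 ≤ y.getD j 0 :=
  not_lt.1 fun hlt =>
    not_lt.2 hxy ((lt_iff_exists_getD h.symm).2 ⟨j, h ▸ hj, fun t ht => (he t ht).symm, hlt⟩)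

theorem getD_rotate {z : List ℕ} {t : ℕ} (i : ℕ) (ht : t < z.length) :
    (z.rotate i).getD t 0 = z.getD ((t + i) % z.length) 0 := by
  rw [List.getD_eq_getElem _ _ (by rwa [List.length_rotate]), List.getElem_rotate,
    List.getD_eq_getElem _ _ (Nat.mod_lt _ (by omega))]

theorem getD_take_of_lt {w : List ℕ} {q t : ℕ} (ht : t < q) :
    (w.take q).getD t 0 = w.getD t 0 := by
  simp [List.getD_eq_getElem?_getD, ht]

end List

theorem exists_first_lt {x y : ℕ → ℕ} {N : ℕ}
    (hle : ∀ t < N, (∀ s < t, x s = y s) → x t ≤ y t)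
    (hlt : (∀ s < N, x s = y s) → x N < y N) :
    ∃ t ≤ N, (∀ s < t, x s = y s) ∧ x t < y t := by
  by_cases hagree : ∀ s < N, x s = y s
  · exact ⟨N, le_rfl, hagree, hlt hagree⟩
  push Not at hagree
  obtain ⟨hN, hne⟩ := Nat.find_spec hagree
  have he : ∀ s < Nat.find hagree, x s = y s := fun s hs => by
    have := Nat.find_min hagree hs
    push Not at this
    exact this (hs.trans hN)
  exact ⟨_, hN.le, he, (hle _ hN he).lt_of_ne hne⟩

/-- The infinite word `u u u ⋯`; constantly `0` when `u = []`. -/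
def periodicSeq (u : List ℕ) (t : ℕ) : ℕ := u.getD (t % u.length) 0

def periodicExtension (u : List ℕ) (n : ℕ) : List ℕ := (List.range n).map (periodicSeq u)

section Periodic

variable {u : List ℕ}

theorem periodicSeq_of_lt {t : ℕ} (ht : t < u.length) : periodicSeq u t = u.getD t 0 := by
  rw [periodicSeq, Nat.mod_eq_of_lt ht]

theorem periodicSeq_mod (t : ℕ) : periodicSeq u (t % u.length) = periodicSeq u t := by
  simp [periodicSeq]

theorem periodicSeq_mul_add (q t : ℕ) : periodicSeq u (u.length * q + t) = periodicSeq u t := by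
  simp [periodicSeq]

theorem periodicSeq_mem (hu : u ≠ []) (t : ℕ) : periodicSeq u t ∈ u := by
  rw [periodicSeq, List.getD_eq_getElem _ _ (Nat.mod_lt _ (List.length_pos_iff.2 hu))]
  exact List.getElem_mem _

@[simp]
theorem length_periodicExtension (n : ℕ) : (periodicExtension u n).length = n := by
  simp [periodicExtension]

theorem getD_periodicExtension {n t : ℕ} (ht : t < n) :
    (periodicExtension u n).getD t 0 = periodicSeq u t := by
  rw [List.getD_eq_getElem _ _ (by simpa using ht)]
  simp [periodicExtension]

theorem periodicExtension_succ (n : ℕ) :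
    periodicExtension u (n + 1) = periodicExtension u n ++ [periodicSeq u n] := by
  simp [periodicExtension, List.range_succ]

theorem periodicExtension_prefix {m n : ℕ} (h : m ≤ n) :
    periodicExtension u m <+: periodicExtension u n := by
  simp [List.prefix_iff_eq_take, periodicExtension, ← List.map_take, h]

theorem periodicExtension_subset (hu : u ≠ []) (n : ℕ) : periodicExtension u n ⊆ u := by
  intro a ha
  obtain ⟨t, -, rfl⟩ := List.mem_map.1 ha
  exact periodicSeq_mem hu t

theorem getD_periodicExtension_append_of_lt {n t c : ℕ} (ht : t < n) :
    (periodicExtension u n ++ [c]).getD t 0 = periodicSeq u t := by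
  rw [List.getD_append _ _ _ _ (by simpa using ht), getD_periodicExtension ht]

theorem getD_periodicExtension_append_self (n c : ℕ) :
    (periodicExtension u n ++ [c]).getD n 0 = c := by
  simp

end Periodic

theorem isLyndon_singleton (a : ℕ) : IsLyndon [a] :=
  ⟨List.cons_ne_nil a [], fun _ hi0 hi1 => by simp at hi1; omega⟩

theorem IsLyndon.isNecklace {z : List ℕ} (hz : IsLyndon z) : IsNecklace z := by
  intro i
  rw [← List.rotate_mod]
  rcases Nat.eq_zero_or_pos (i % z.length) with h0 | hpos
  · rw [h0, List.rotate_zero]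
  · exact (hz.2 _ hpos (Nat.mod_lt _ (List.length_pos_iff.2 hz.1))).le

theorem IsNecklace.isPrenecklace {k : ℕ} {v : List ℕ} (hv : IsNecklace v) (hk : ∀ a ∈ v, a < k) :
    IsPrenecklace k v :=
  ⟨v, List.prefix_refl v, hk, hv⟩

theorem IsPrenecklace.lt_of_mem {k : ℕ} {w : List ℕ} (hw : IsPrenecklace k w) {a : ℕ}
    (ha : a ∈ w) : a < k := by
  obtain ⟨v, hwv, hk, -⟩ := hw
  exact hk a (hwv.subset ha)

section Necklace

variable {u : List ℕ}

theorem IsNecklace.periodicSeq_le_shift (hu : IsNecklace u) (i : ℕ) {t : ℕ}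
    (h : ∀ s < t, periodicSeq u s = periodicSeq u (i + s)) :
    periodicSeq u t ≤ periodicSeq u (i + t) := by
  rcases eq_or_ne u [] with rfl | hu0
  · simp [periodicSeq]
  have hp := List.length_pos_iff.2 hu0
  have hrot : ∀ s < u.length, periodicSeq u (i + s) = (u.rotate i).getD s 0 := fun s hs => by
    rw [List.getD_rotate i hs, add_comm]; rfl
  by_cases ht : t < u.length
  · rw [periodicSeq_of_lt ht, hrot t ht]
    refine List.getD_le_getD_of_le (List.length_rotate u i).symm (hu i) ht fun s hs => ?_
    rw [← periodicSeq_of_lt (hs.trans ht), h s hs, hrot s (hs.trans ht)]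
  · have hs : t % u.length < t := (Nat.mod_lt _ hp).trans_le (not_lt.1 ht)
    refine le_of_eq ?_
    rw [← periodicSeq_mod t, h _ hs, ← periodicSeq_mod (i + _), Nat.add_mod_mod, periodicSeq_mod]

theorem IsNecklace.periodicExtension_mul_length (hu : IsNecklace u) (T : ℕ) :
    IsNecklace (periodicExtension u (T * u.length)) := by
  intro i
  have hget : ∀ {t}, t < T * u.length →
      (periodicExtension u (T * u.length)).getD t 0 = periodicSeq u t ∧
      ((periodicExtension u (T * u.length)).rotate i).getD t 0 = periodicSeq u (i + t) :=
    fun ht => ⟨getD_periodicExtension ht, by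
      rw [List.getD_rotate i (by simpa using ht), length_periodicExtension,
        getD_periodicExtension (Nat.mod_lt _ (by omega)), ← periodicSeq_mod, Nat.mod_mul_left_mod,
        periodicSeq_mod, add_comm]⟩
  refine not_lt.1 fun hlt => ?_
  obtain ⟨j, hj, he, hlt⟩ := (List.lt_iff_exists_getD (by simp)).1 hlt
  simp only [List.length_rotate, length_periodicExtension] at hj
  rw [(hget hj).1, (hget hj).2] at hlt
  refine hlt.not_ge (hu.periodicSeq_le_shift i fun s hs => ?_)
  have := he s hs
  rwa [(hget (hs.trans hj)).1, (hget (hs.trans hj)).2, eq_comm] at this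

theorem IsNecklace.isLyndon_periodicExtension_append (hu : IsNecklace u) {j c : ℕ}
    (hc : periodicSeq u j < c) : IsLyndon (periodicExtension u j ++ [c]) := by
  set z := periodicExtension u j ++ [c]
  have hz : z.length = j + 1 := by simp [z]
  refine ⟨by simp [z], fun i hi0 hi => ?_⟩
  rw [hz] at hi
  have hrot : ∀ t, t + i ≤ j → (z.rotate i).getD t 0 = z.getD (i + t) 0 := fun t ht => by
    rw [List.getD_rotate i (by omega), hz, Nat.mod_eq_of_lt (by omega), add_comm]
  have hlow : ∀ t < j, z.getD t 0 = periodicSeq u t := fun t ht =>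
    getD_periodicExtension_append_of_lt ht
  have hseq : ∀ t ≤ j - i, (∀ s < t, z.getD s 0 = z.getD (i + s) 0) →
      periodicSeq u t ≤ periodicSeq u (i + t) := fun t ht he =>
    hu.periodicSeq_le_shift i fun s hs => by
      rw [← hlow s (by omega), ← hlow (i + s) (by omega)]; exact he s hs
  obtain ⟨t, ht, he, hlt⟩ := exists_first_lt (x := fun t => z.getD t 0)
    (y := fun t => z.getD (i + t) 0) (N := j - i)
    (fun t ht he => by
      simp only [hlow t (by omega), hlow (i + t) (by omega)]; exact hseq t ht.le he)
    (fun he => calc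
      z.getD (j - i) 0 = periodicSeq u (j - i) := hlow _ (by omega)
      _ ≤ periodicSeq u (i + (j - i)) := hseq _ le_rfl he
      _ < c := by rwa [Nat.add_sub_cancel' (by omega)]
      _ = z.getD (i + (j - i)) 0 := by
        rw [Nat.add_sub_cancel' (by omega)]; exact (getD_periodicExtension_append_self j c).symm)
  refine (List.lt_iff_exists_getD (List.length_rotate z i).symm).2 ⟨t, by omega, fun s hs => ?_, ?_⟩
  · rw [hrot s (by omega)]; exact he s hs
  · rw [hrot t (by omega)]; exact hlt

end Necklace

/-- Letter-wise form of `w.take (w.length - i) ≤ w.drop i` for all `i`. -/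
def PrefixLeShifts (w : List ℕ) : Prop :=
  ∀ i j, i + j < w.length → (∀ t < j, w.getD t 0 = w.getD (i + t) 0) →
    w.getD j 0 ≤ w.getD (i + j) 0

theorem IsPrenecklace.prefixLeShifts {k : ℕ} {w : List ℕ} (hw : IsPrenecklace k w) :
    PrefixLeShifts w := by
  obtain ⟨v, hwv, -, hv⟩ := hw
  have hlen := hwv.length_le
  have hget : ∀ t < w.length, w.getD t 0 = v.getD t 0 := fun t ht => by
    rw [List.getD_eq_getElem _ _ ht, List.getD_eq_getElem _ _ (by omega), hwv.getElem ht]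
  intro i j hij he
  have hrot : ∀ t, t + i < w.length → (v.rotate i).getD t 0 = w.getD (i + t) 0 := fun t ht => by
    rw [List.getD_rotate i (by omega), Nat.mod_eq_of_lt (by omega), add_comm, hget _ (by omega)]
  have := List.getD_le_getD_of_le (List.length_rotate v i).symm (hv i) (j := j) (by omega)
    fun t ht => by rw [hrot t (by omega), ← hget t (by omega)]; exact he t ht
  rwa [hrot j (by omega), ← hget j (by omega)] at this

theorem isLyndon_take_one {w : List ℕ} (hw : w ≠ []) : IsLyndon (w.take 1) := by
  obtain ⟨a, v, rfl⟩ := List.exists_cons_of_ne_nil hw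
  exact isLyndon_singleton a

theorem lyn_mem {w : List ℕ} (hw : w ≠ []) : lyn w ≤ w.length ∧ IsLyndon (w.take (lyn w)) := by
  have : lyn w ∈ {p | p ≤ w.length ∧ IsLyndon (w.take p)} :=
    Nat.sSup_mem ⟨1, List.length_pos_iff.2 hw, isLyndon_take_one hw⟩ ⟨_, fun _ h => h.1⟩
  exact this

theorem le_lyn {w : List ℕ} {q : ℕ} (hq : q ≤ w.length) (h : IsLyndon (w.take q)) : q ≤ lyn w :=
  le_csSup ⟨w.length, fun _ h => h.1⟩ ⟨hq, h⟩

theorem lyn_pos {w : List ℕ} (hw : w ≠ []) : 0 < lyn w :=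
  le_lyn (List.length_pos_iff.2 hw) (isLyndon_take_one hw)

theorem PrefixLeShifts.eq_periodicExtension {w : List ℕ} (h : PrefixLeShifts w) (hw : w ≠ []) :
    w = periodicExtension (w.take (lyn w)) w.length := by
  obtain ⟨hpw, hu⟩ := lyn_mem hw
  set u := w.take (lyn w)
  have hup : u.length = lyn w := List.length_take_of_le hpw
  have hp := lyn_pos hw
  suffices ∀ j ≤ w.length, w.take j = periodicExtension u j by simpa using this _ le_rfl
  intro j
  induction j with
  | zero => simp [periodicExtension]
  | succ j ih =>
    intro hj
    have hprev : ∀ t < j, w.getD t 0 = periodicSeq u t := fun t ht => by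
      rw [← getD_periodicExtension ht, ← ih (by omega), List.getD_take_of_lt ht]
    have hletter : w.getD j 0 = periodicSeq u j := by
      rcases lt_or_ge j (lyn w) with hjp | hjp
      · rw [periodicSeq_of_lt (hup ▸ hjp), List.getD_take_of_lt hjp]
      have hdiv := Nat.div_add_mod j (lyn w)
      have hge : periodicSeq u j ≤ w.getD j 0 := by
        have := h (lyn w * (j / lyn w)) (j % lyn w) (by omega) fun t ht => by
          rw [hprev t (by omega), hprev _ (by omega), ← hup, periodicSeq_mul_add]
        rwa [hdiv, hprev _ ((Nat.mod_lt _ hp).trans_le hjp), ← hup, periodicSeq_mod] at this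
      refine (hge.eq_or_lt.resolve_right fun hlt => ?_).symm
      have hlyn := le_lyn (q := j + 1) hj (by
        rw [List.take_succ_eq_append_getElem (by omega), ← List.getD_eq_getElem _ 0, ih (by omega)]
        exact hu.isNecklace.isLyndon_periodicExtension_append hlt)
      omega
    rw [List.take_succ_eq_append_getElem (by omega), ← List.getD_eq_getElem _ 0, ih (by omega),
      hletter, periodicExtension_succ]

theorem IsNecklace.isPrenecklace_periodicExtension_append_iff {k m b : ℕ} {u : List ℕ}
    (hu : IsNecklace u) (hu0 : u ≠ []) (huk : ∀ a ∈ u, a < k) (hm : u.length ≤ m) (hb : b < k) :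
    IsPrenecklace k (periodicExtension u m ++ [b]) ↔ periodicSeq u m ≤ b := by
  have hp := List.length_pos_iff.2 hu0
  constructor
  · intro h
    have hdiv := Nat.div_add_mod m u.length
    have := h.prefixLeShifts (u.length * (m / u.length)) (m % u.length) (by simp; omega)
      fun t ht => by
        rw [getD_periodicExtension_append_of_lt (by omega),
          getD_periodicExtension_append_of_lt (by omega), periodicSeq_mul_add]
    rwa [hdiv, getD_periodicExtension_append_self, getD_periodicExtension_append_of_lt
      ((Nat.mod_lt _ hp).trans_le hm), periodicSeq_mod] at this
  · intro hle
    rcases hle.eq_or_lt with heq | hlt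
    · rw [← heq, ← periodicExtension_succ]
      exact ⟨_, periodicExtension_prefix (Nat.le_mul_of_pos_right (m + 1) hp),
        fun a ha => huk a (periodicExtension_subset hu0 _ ha), hu.periodicExtension_mul_length _⟩
    · refine (hu.isLyndon_periodicExtension_append hlt).isNecklace.isPrenecklace fun a ha => ?_
      rcases List.mem_append.1 ha with ha | ha
      · exact huk a (periodicExtension_subset hu0 _ ha)
      · exact (List.mem_singleton.1 ha).trans_lt hb

theorem prenecklace_extension_general (n k : ℕ) (w : List ℕ)
    (hw : IsPrenecklace k w) (hlen : w.length = n - 1) (p : ℕ) (hp : p = lyn w)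
    (b : ℕ) (hb : b < k) :
    IsPrenecklace k (w ++ [b]) ↔ w.getD (n - p - 1) 0 ≤ b := by
  rcases eq_or_ne w [] with rfl | hw0
  · simpa using (isLyndon_singleton b).isNecklace.isPrenecklace (by simpa using hb)
  subst hp
  obtain ⟨hpw, hu⟩ := lyn_mem hw0
  set u := w.take (lyn w)
  have hper : periodicExtension u w.length = w := (hw.prefixLeShifts.eq_periodicExtension hw0).symm
  have hpos := lyn_pos hw0
  have hidx : w.getD (n - lyn w - 1) 0 = periodicSeq u w.length := by
    have := getD_periodicExtension (u := u) (show w.length - lyn w < w.length by omega)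
    rw [hper] at this
    rw [show n - lyn w - 1 = w.length - lyn w by omega, this, ← periodicSeq_mul_add 1,
      List.length_take_of_le hpw, mul_one, Nat.add_sub_cancel' hpw]
  rw [hidx, ← hu.isNecklace.isPrenecklace_periodicExtension_append_iff hu.1
    (fun a ha => hw.lt_of_mem (List.mem_of_mem_take ha)) (List.length_take_le' _ _) hb, hper]

/-- Fundamental theorem of necklaces (extension criterion). -/
theorem prenecklace_extension (n k : ℕ) (hn : 2 ≤ n) (hk : 2 ≤ k) (w : List ℕ)
    (hw : IsPrenecklace k w) (hlen : w.length = n - 1) (p : ℕ) (hp : p = lyn w)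
    (b : ℕ) (hb : b < k) :
    IsPrenecklace k (w ++ [b]) ↔ w.getD (n - p - 1) 0 ≤ b :=
  prenecklace_extension_general n k w hw hlen p hp b hb
end

section
/- If w = a_1a_2⋯a_n is a prenecklace over the alphabet {0,…,k−1} and b > a_n, then the word a_1a_2⋯a_{n−1}b is a Lyndon word. -/
theorem List.append_lt_append_of_length_eq {α : Type*} [LT α] {x y : List α}
    (hlen : x.length = y.length) (h : x < y) (s t : List α) : x ++ s < y ++ t := by
  induction x generalizing y with
  | nil =>
    obtain rfl : y = [] := List.eq_nil_of_length_eq_zero hlen.symm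
    exact absurd h (List.not_lt_nil _)
  | cons a x ih =>
    obtain _ | ⟨c, y⟩ := y
    · simp at hlen
    · rcases List.cons_lt_cons_iff.mp h with hac | ⟨rfl, hxy⟩
      · exact List.Lex.rel hac
      · exact List.Lex.cons (ih (by simpa using hlen) hxy)

theorem List.le_of_append_le_append_of_length_eq {α : Type*} [LinearOrder α] {x y s t : List α}
    (hlen : x.length = y.length) (h : x ++ s ≤ y ++ t) : x ≤ y :=
  not_lt.mp fun hyx => not_lt.mpr h (List.append_lt_append_of_length_eq hlen.symm hyx t s)

theorem List.lt_rotate_of_take_lt_drop {α : Type*} [LT α] {u : List α} {i : ℕ}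
    (hi : i ≤ u.length) (h : u.take (u.length - i) < u.drop i) : u < u.rotate i := by
  rw [List.rotate_eq_drop_append_take hi]
  conv_lhs => rw [← List.take_append_drop (u.length - i) u]
  exact List.append_lt_append_of_length_eq (by simp) h _ _

theorem IsNecklace.take_le_drop_of_prefix {v w : List ℕ} (hv : IsNecklace v) (hw : w <+: v)
    (i : ℕ) : w.take (w.length - i) ≤ w.drop i := by
  obtain ⟨r, rfl⟩ := hw
  rcases le_or_gt w.length i with hi | hi
  · rw [Nat.sub_eq_zero_of_le hi, List.take_zero]
    exact le_of_not_gt (List.not_lt_nil _)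
  have hrot : (w ++ r).rotate i = w.drop i ++ (r ++ w.take i) := by
    rw [List.rotate_eq_drop_append_take (by simp; omega), List.drop_append_of_le_length hi.le,
      List.take_append_of_le_length hi.le, List.append_assoc]
  have hsplit : w ++ r = w.take (w.length - i) ++ (w.drop (w.length - i) ++ r) := by
    rw [← List.append_assoc, List.take_append_drop]
  have hneck := hv i
  rw [hrot, hsplit] at hneck
  exact List.le_of_append_le_append_of_length_eq (by simp) hneck

theorem prenecklace_lastReplace_lyndon_general (k : ℕ) (w : List ℕ) (hw : IsPrenecklace k w)
    (hne : w ≠ []) (b : ℕ) (h : w.getLast hne < b) :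
    IsLyndon (w.dropLast ++ [b]) := by
  obtain ⟨v, hwv, -, hv⟩ := hw
  obtain ⟨p, a, rfl⟩ := List.eq_nil_or_concat' w |>.resolve_left hne
  simp only [List.getLast_append_singleton] at h
  simp only [List.dropLast_concat]
  refine ⟨by simp, fun i hi0 hin => List.lt_rotate_of_take_lt_drop hin.le ?_⟩
  simp only [List.length_append, List.length_singleton] at hin ⊢
  have hprefix : (p ++ [b]).take (p.length + 1 - i) = (p ++ [a]).take (p.length + 1 - i) := by
    rw [List.take_append_of_le_length (by simp; omega),
      List.take_append_of_le_length (by simp; omega)]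
  have hsuffix : ∀ c, (p ++ [c]).drop i = p.drop i ++ [c] := fun c =>
    List.drop_append_of_le_length (by omega)
  calc (p ++ [b]).take (p.length + 1 - i) = (p ++ [a]).take (p.length + 1 - i) := hprefix
    _ ≤ p.drop i ++ [a] := by simpa [hsuffix] using hv.take_le_drop_of_prefix hwv i
    _ < p.drop i ++ [b] := List.append_left_lt (List.cons_lt_cons_iff.mpr (.inl h))
    _ = (p ++ [b]).drop i := (hsuffix b).symm

/-- Replacing the last letter of a prenecklace by a larger letter gives a Lyndon word. -/
theorem prenecklace_lastReplace_lyndon (k : ℕ) (w : List ℕ) (hw : IsPrenecklace k w)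
    (hne : w ≠ []) (b : ℕ) (hb : b < k) (h : w.getLast hne < b) :
    IsLyndon (w.dropLast ++ [b]) :=
  prenecklace_lastReplace_lyndon_general k w hw hne b h
end

section
/- If w is a necklace over {0,…,k−1} with first letter a_1 and b is a letter with b > a_1, then the concatenation wb is a Lyndon word. -/
/-!
Rotating `w ++ [b]` by `0 < i ≤ |w|` gives `w.drop i ++ b :: w.take i`. As `w` is a necklace,
`w ≤ w.drop i ++ w.take i`. Either `w` is already smaller within the first `|w| - i` letters, or
`w = w.drop i ++ s` with `s ≤ w.take i`; then the letter of `s` facing `b` is at most the first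
letter of `w`, which is smaller than `b`.
-/

namespace List

variable {α : Type*}

theorem rotate_append_singleton {w : List α} {i : ℕ} (b : α) (hi : i ≤ w.length) :
    (w ++ [b]).rotate i = w.drop i ++ b :: w.take i := by
  rw [rotate_eq_drop_append_take (by simp; omega), drop_append_of_le_length hi,
    take_append_of_le_length hi, append_assoc, singleton_append]

variable [LinearOrder α]

theorem append_lt_append_iff_of_length_eq {x y p q : List α} (h : x.length = y.length) :
    x ++ p < y ++ q ↔ x < y ∨ x = y ∧ p < q := by
  induction x generalizing y with
  | nil =>
    obtain rfl : y = [] := length_eq_zero_iff.mp h.symm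
    simp
  | cons a x ih =>
    cases y with
    | nil => simp at h
    | cons c y =>
      simp only [cons_append, cons_lt_cons_iff, ih (Nat.succ.inj h), cons.injEq]
      tauto

theorem append_le_append_iff_of_length_eq {x y p q : List α} (h : x.length = y.length) :
    x ++ p ≤ y ++ q ↔ x < y ∨ x = y ∧ p ≤ q := by
  rw [← not_lt, append_lt_append_iff_of_length_eq h.symm, not_or, not_and, not_lt, not_lt,
    le_iff_lt_or_eq]
  constructor
  · rintro ⟨hlt | rfl, hpq⟩
    exacts [Or.inl hlt, Or.inr ⟨rfl, hpq rfl⟩]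
  · rintro (hlt | ⟨rfl, hpq⟩)
    exacts [⟨Or.inl hlt, fun heq => absurd heq hlt.ne'⟩, ⟨Or.inr rfl, fun _ => hpq⟩]

theorem append_lt_append_cons_of_le {x u t p q : List α} {a b : α}
    (hlen : u.length < x.length) (hle : x ≤ u ++ a :: t) (hab : a < b) :
    x ++ p < u ++ b :: q := by
  rw [← take_append_drop u.length x] at hle ⊢
  rw [append_le_append_iff_of_length_eq (by simp; omega)] at hle
  rw [append_assoc, append_lt_append_iff_of_length_eq (by simp; omega)]
  refine hle.imp id fun ⟨heq, hle⟩ => ⟨heq, ?_⟩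
  obtain ⟨c, s, hcs⟩ := exists_cons_of_ne_nil (l := x.drop u.length) (by simp; omega)
  rw [hcs] at hle ⊢
  have hca : c ≤ a := le_of_not_gt fun hac => not_lt.mpr hle (Lex.rel hac)
  exact Lex.rel (hca.trans_lt hab)

end List

theorem necklace_append_lyndon_general (w : List ℕ)
    (hw : IsNecklace w) (hne : w ≠ []) (b : ℕ) (h : w.head hne < b) :
    IsLyndon (w ++ [b]) := by
  refine ⟨by simp, fun i hi hilen => ?_⟩
  have hile : i ≤ w.length := by simpa [Nat.lt_succ_iff] using hilen
  obtain ⟨a, w', rfl⟩ := List.exists_cons_of_ne_nil hne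
  obtain ⟨j, rfl⟩ : ∃ j, i = j + 1 := ⟨i - 1, by omega⟩
  have hrot : a :: w' ≤ (a :: w').drop (j + 1) ++ a :: w'.take j := by
    simpa [List.rotate_eq_drop_append_take hile] using hw (j + 1)
  rw [List.rotate_append_singleton b hile]
  exact List.append_lt_append_cons_of_le (by simp) hrot h

/-- Appending a letter larger than the first letter of a necklace gives a Lyndon word. -/
theorem necklace_append_lyndon (k : ℕ) (w : List ℕ) (halph : ∀ a ∈ w, a < k)
    (hw : IsNecklace w) (hne : w ≠ []) (b : ℕ) (hb : b < k) (h : w.head hne < b) :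
    IsLyndon (w ++ [b]) :=
  necklace_append_lyndon_general w hw hne b h
end

section
/- If w = a_1a_2⋯a_n is a prenecklace and p = lyn(w) < n, then w = (a_1a_2⋯a_p)^j a_1a_2⋯a_i for some integers j ≥ 1 and 1 ≤ i ≤ p; that is, w is a power of its longest Lyndon prefix followed by a (possibly full) prefix of that Lyndon prefix. -/
/-!
Put `p = lyn w` and `u = w.take p`; "`y` has period `p`" is expressed as `y.drop p <+: y`.
By induction on `j`, every prefix `w.take j` has period `p`. The letter `w[j]` cannot be smaller
than the letter `w[j - p]` predicted by the period, since rotating the ambient necklace by `p`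
would then give a smaller word; nor can it be larger, since then `w.take (j + 1)` would be a
Lyndon word longer than `u` (a word of period `p` whose first `p` letters form a Lyndon word
becomes Lyndon when followed by a letter larger than the predicted one). A word with period
`p < |w|` is a power of `u` followed by a nonempty prefix of `u`.
-/

namespace List

variable {α : Type*}

theorem append_lt_append_of_lt_of_not_prefix [LT α] {x y : List α} (h : x < y)
    (hxy : ¬x <+: y) (s t : List α) : x ++ s < y ++ t := by
  rcases List.lt_iff_exists.1 h with ⟨hx, -⟩ | ⟨i, hx, hy, hagree, hlt⟩
  · exact absurd (prefix_iff_eq_take.2 hx) hxy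
  · refine List.lt_iff_exists.2 <| .inr ⟨i, by simp; omega, by simp; omega, fun j hj => ?_, ?_⟩
    · simpa [getElem_append_left, hj.trans hx, hj.trans hy] using hagree j hj
    · simpa [getElem_append_left, hx, hy] using hlt

theorem eq_drop_append_drop_of_drop_prefix {y : List α} {p : ℕ} (hper : y.drop p <+: y) :
    y = y.drop p ++ y.drop (y.length - p) := by
  conv_lhs => rw [← take_append_drop (y.length - p) y]
  rw [prefix_iff_eq_take.1 hper, length_drop]

theorem eq_drop_append_getElem_cons {y : List α} {p : ℕ} (hper : y.drop p <+: y) (hp : 0 < p)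
    (hpy : p ≤ y.length) :
    y = y.drop p ++ y[y.length - p] :: y.drop (y.length - p + 1) := by
  conv_lhs => rw [eq_drop_append_drop_of_drop_prefix hper]
  rw [drop_eq_getElem_cons (i := y.length - p) (by omega)]

theorem drop_prefix_append_singleton {y : List α} {p : ℕ} {c : α} (hper : y.drop p <+: y)
    (hp : 0 < p) (hpy : p ≤ y.length) (hc : y[y.length - p] = c) :
    (y ++ [c]).drop p <+: y ++ [c] := by
  have hy := eq_drop_append_getElem_cons hper hp hpy
  rw [hc] at hy
  rw [drop_append_of_le_length hpy]
  conv_rhs => rw [hy]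
  simp

theorem exists_eq_flatten_replicate_append_take {w : List α} {p : ℕ}
    (hper : w.drop p <+: w) (hp : 0 < p) (hpw : p < w.length) :
    ∃ j i, 1 ≤ j ∧ 1 ≤ i ∧ i ≤ p ∧
      w = (replicate j (w.take p)).flatten ++ w.take i := by
  induction hlen : w.length using Nat.strong_induction_on generalizing w with
  | _ n ih =>
  have hdrop : w.drop p = w.take (w.length - p) := by
    simpa using prefix_iff_eq_take.1 hper
  by_cases hshort : w.length ≤ 2 * p
  · refine ⟨1, w.length - p, le_rfl, by omega, by omega, ?_⟩
    rw [← hdrop]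
    simp
  · have htake : ∀ i ≤ w.length - p, (w.drop p).take i = w.take i := fun i hi => by
      rw [hdrop, take_take, min_eq_left hi]
    obtain ⟨j, i, hj, hi, hip, heq⟩ :=
      ih (w.length - p) (by omega) (hper.drop p) (by simp; omega) length_drop
    rw [htake p (by omega), htake i (by omega)] at heq
    refine ⟨j + 1, i, by omega, hi, hip, ?_⟩
    rw [replicate_succ, flatten_cons, append_assoc, ← heq, take_append_drop]

end List

theorem IsLyndon.drop_not_prefix {u : List ℕ} (hu : IsLyndon u) {r : ℕ} (hr0 : 0 < r)
    (hr : r < u.length) : ¬u.drop r <+: u := by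
  intro hpre
  -- `u = u.take q ++ u.drop q = u.take r ++ u.take q`: the rotations by `r` and by `q` would
  -- compare `u.drop q` and `u.take r` in both directions.
  set q := u.length - r
  have hborder : u.drop r = u.take q := by simpa [q] using List.prefix_iff_eq_take.1 hpre
  have hrot_r : u.take q ++ u.drop q < u.take q ++ u.take r := by
    simpa [List.rotate_eq_drop_append_take hr.le, hborder] using hu.2 r hr0 hr
  have hrot_q : u.take r ++ u.take q < u.drop q ++ u.take q := by
    have h := hu.2 q (by omega) (by omega)
    rw [List.rotate_eq_drop_append_take (by omega)] at h
    calc u.take r ++ u.take q = u := by rw [← hborder, List.take_append_drop]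
      _ < _ := h
  have hlt : u.drop q < u.take r :=
    List.not_le.1 fun hle => List.not_lt.2 (List.append_left_le hle) hrot_r
  have hlen : (u.take r).length = (u.drop q).length := by simp [q]; omega
  refine lt_asymm hrot_q (List.append_lt_append_of_lt_of_not_prefix hlt (fun h => ?_) _ _)
  exact hlt.ne (h.eq_of_length hlen.symm)

theorem isLyndon_iff_lt_drop {u : List ℕ} :
    IsLyndon u ↔ u ≠ [] ∧ ∀ i, 0 < i → i < u.length → u < u.drop i := by
  refine ⟨fun hu => ⟨hu.1, fun i hi0 hi => ?_⟩,
    fun ⟨hne, hu⟩ => ⟨hne, fun i hi0 hi => ?_⟩⟩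
  · by_contra hle
    have hlt : u.drop i < u := lt_of_le_of_ne (not_lt.1 hle) fun h => by
      have := congrArg List.length h
      simp at this; omega
    have := List.append_lt_append_of_lt_of_not_prefix hlt (hu.drop_not_prefix hi0 hi) (u.take i) []
    rw [List.append_nil, ← List.rotate_eq_drop_append_take hi.le] at this
    exact lt_asymm (hu.2 i hi0 hi) this
  · have hnp : ¬u <+: u.drop i := fun h => by
      have := h.length_le
      simp at this; omega
    simpa [List.rotate_eq_drop_append_take hi.le] using
      List.append_lt_append_of_lt_of_not_prefix (hu i hi0 hi) hnp [] (u.take i)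

theorem IsNecklace.getElem_length_sub_le {v y : List ℕ} {p c : ℕ} (hv : IsNecklace v)
    (hyv : y ++ [c] <+: v) (hper : y.drop p <+: y) (hp : 0 < p) (hpy : p ≤ y.length) :
    y[y.length - p] ≤ c := by
  obtain ⟨r, rfl⟩ := hyv
  have hrot : (y ++ [c] ++ r).rotate p = y.drop p ++ c :: (r ++ (y ++ [c] ++ r).take p) := by
    rw [List.rotate_eq_drop_append_take (by simp; omega), List.append_assoc,
      List.drop_append_of_le_length hpy]
    simp
  have hself : y ++ [c] ++ r =
      y.drop p ++ y[y.length - p] :: (y.drop (y.length - p + 1) ++ c :: r) := by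
    conv_lhs => rw [List.eq_drop_append_getElem_cons hper hp hpy]
    simp only [List.append_assoc, List.cons_append, List.nil_append]
  have hle := hv p
  rw [hrot] at hle
  nth_rewrite 1 [hself] at hle
  by_contra hlt
  exact absurd hle (not_le.2 (List.append_left_lt (List.cons_lt_cons_iff.2 (.inl (not_le.1 hlt)))))

theorem isLyndon_append_singleton {y : List ℕ} {p b : ℕ} (hper : y.drop p <+: y)
    (hlyn : IsLyndon (y.take p)) (hp : 0 < p) (hpy : p ≤ y.length) (hb : y[y.length - p] < b) :
    IsLyndon (y ++ [b]) := by
  refine isLyndon_iff_lt_drop.2 ⟨by simp, fun i hi0 hi => ?_⟩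
  simp only [List.length_append, List.length_singleton] at hi
  induction i using Nat.strong_induction_on with
  | _ i ih =>
  -- A shift `i < p` already loses inside the Lyndon word `y.take p`. A shift `i ≥ p` loses to
  -- the shift `i - p`, which agrees with it up to the end of `y` and then has the predicted
  -- letter `y[y.length - p] < b`.
  rcases lt_or_ge i p with hip | hpi
  · have hu := (isLyndon_iff_lt_drop.1 hlyn).2 i hi0 (by simp; omega)
    have hsplit : y ++ [b] = y.take p ++ (y.drop p ++ [b]) := by
      rw [← List.append_assoc, List.take_append_drop]
    have hnp : ¬y.take p <+: (y.take p).drop i := fun h => by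
      have := h.length_le
      simp at this; omega
    rw [hsplit, List.drop_append_of_le_length (by simp; omega)]
    exact List.append_lt_append_of_lt_of_not_prefix hu hnp _ _
  · have hshift : (y ++ [b]).drop (i - p) < (y ++ [b]).drop i := by
      have hz : (y.drop (i - p)).drop p <+: y.drop (i - p) := by
        rw [List.drop_drop, show i - p + p = p + (i - p) by omega, ← List.drop_drop]
        exact hper.drop _
      have hdec := List.eq_drop_append_getElem_cons hz hp (by simp; omega)
      simp only [List.drop_drop, List.length_drop, List.getElem_drop, show i - p + p = i by omega,
        show i - p + (y.length - (i - p) - p) = y.length - p by omega] at hdec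
      rw [List.drop_append_of_le_length (by omega), List.drop_append_of_le_length (by omega), hdec,
        List.append_assoc]
      exact List.append_left_lt (List.cons_lt_cons_iff.2 (.inl hb))
    rcases eq_or_lt_of_le hpi with rfl | hpi'
    · simpa using hshift
    · exact (ih (i - p) (by omega) (by omega) (by omega)).trans hshift

theorem isLyndon_take_lyn {w : List ℕ} (hw : w ≠ []) : IsLyndon (w.take (lyn w)) :=
  (Nat.sSup_mem (s := {q | q ≤ w.length ∧ IsLyndon (w.take q)})
    ⟨1, List.length_pos_of_ne_nil hw, isLyndon_take_one hw⟩ ⟨w.length, fun _ hr => hr.1⟩).2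

theorem IsNecklace.drop_lyn_prefix_of_prefix {v w : List ℕ} (hv : IsNecklace v)
    (hwv : w <+: v) :
    w.drop (lyn w) <+: w := by
  rcases eq_or_ne w [] with rfl | hw
  · simp
  have hp := lyn_pos hw
  suffices h : ∀ j ≤ w.length, (w.take j).drop (lyn w) <+: w.take j by
    simpa using h w.length le_rfl
  intro j hj
  induction j with
  | zero => simp
  | succ j ih =>
    rcases lt_or_ge j (lyn w) with hjp | hpj
    · rw [List.drop_eq_nil_of_le (by simp; omega)]
      exact List.nil_prefix
    set y := w.take j
    have hper := ih (by omega)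
    have hyj : y.length = j := by simp [y]; omega
    have hsucc : w.take (j + 1) = y ++ [w[j]] := (List.take_concat_get' w j (by omega)).symm
    have hlyn : IsLyndon (y.take (lyn w)) := by
      rw [List.take_take, min_eq_left hpj]
      exact isLyndon_take_lyn hw
    have hyv : y ++ [w[j]] <+: v := hsucc ▸ (List.take_prefix _ _).trans hwv
    have hle := hv.getElem_length_sub_le hyv hper hp (by omega)
    have hge : ¬y[y.length - lyn w] < w[j] := fun hlt => by
      have := le_lyn (by omega) (hsucc ▸ isLyndon_append_singleton hper hlyn hp (by omega) hlt)
      omega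
    rw [hsucc]
    exact List.drop_prefix_append_singleton hper hp (by omega) (le_antisymm hle (not_lt.1 hge))

/-- A prenecklace with `lyn(w) < |w|` is a power of its longest Lyndon prefix followed
by a nonempty prefix of that Lyndon prefix. -/
theorem prenecklace_periodic_structure (k : ℕ) (w : List ℕ) (hw : IsPrenecklace k w)
    (n : ℕ) (hn : n = w.length) (p : ℕ) (hp : p = lyn w) (hlt : p < n) :
    ∃ j i : ℕ, 1 ≤ j ∧ 1 ≤ i ∧ i ≤ p ∧
      w = (List.replicate j (w.take p)).flatten ++ w.take i := by
  obtain ⟨v, hwv, -, hv⟩ := hw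
  subst hn hp
  exact List.exists_eq_flatten_replicate_append_take (hv.drop_lyn_prefix_of_prefix hwv)
    (lyn_pos (List.ne_nil_of_length_pos (by omega))) hlt
end

section
/- Let k ≥ 2 and n_0,…,n_{k−1} ≥ 1. The number of stable necklaces with content (n_0,…,n_{k−1}) equals Σ_{i=1}^{k−1} L_k(n_0,…,n_{i−1}, n_i − 1, n_{i+1},…, n_{k−1}). Here a necklace a_1⋯a_n is stable if a_1⋯a_{n−1} is a Lyndon word. -/
/-!
Deleting the last letter maps stable necklaces of content `c` bijectively onto Lyndon words of
content `c - eᵢ` with `i ≠ 0`. A necklace ending in the letter `0` is constant, so the deleted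
letter is nonzero. Conversely a Lyndon word `u` containing `0` starts with `0`, and appending to a
Lyndon word a letter larger than its first letter gives again a Lyndon word, in particular a
necklace.
-/

open List

namespace List

variable {α : Type*} [LinearOrder α]

theorem append_lt_append_of_length_eq_s12 {x y s t : List α} (h : x < y)
    (hl : x.length = y.length) : x ++ s < y ++ t := by
  induction h with
  | nil => simp at hl
  | cons _ ih => exact .cons (ih (by simpa using hl))
  | rel h => exact .rel h

theorem lt_of_append_lt_append_left {x s t : List α} (h : x ++ s < x ++ t) : s < t := by
  induction x with
  | nil => exact h
  | cons a x ih => exact ih ((cons_lt_cons_iff.mp h).resolve_left (lt_irrefl a)).2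

theorem cons_le_cons_iff_of_linearOrder {a b : α} {l l' : List α} :
    a :: l ≤ b :: l' ↔ a < b ∨ a = b ∧ l ≤ l' := by
  simp only [le_iff_lt_or_eq, cons_lt_cons_iff, cons.injEq]
  tauto

end List

theorem IsLyndon.lt_drop_append_take {u : List ℕ} (hu : IsLyndon u) {j : ℕ} (hj0 : 0 < j)
    (hjn : j < u.length) : u < u.drop j ++ u.take j :=
  rotate_eq_drop_append_take hjn.le ▸ hu.2 j hj0 hjn

theorem IsLyndon.take_lt_drop {u : List ℕ} (hu : IsLyndon u) {j : ℕ} (hj0 : 0 < j)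
    (hjn : j < u.length) : u.take (u.length - j) < u.drop j := by
  rcases lt_trichotomy (u.take (u.length - j)) (u.drop j) with hlt | heq | hgt
  · exact hlt
  · -- a border of length `|u| - j`: the rotations by `j` and by `|u| - j` cannot both exceed `u`
    have hrot := hu.lt_drop_append_take hj0 hjn
    rw [← heq] at hrot
    nth_rw 1 [← take_append_drop (u.length - j) u] at hrot
    have hsuffix := lt_of_append_lt_append_left hrot
    have hrot' := hu.lt_drop_append_take (j := u.length - j) (by omega) (by omega)
    nth_rw 1 [← take_append_drop j u] at hrot'
    exact absurd (append_lt_append_of_length_eq_s12 hsuffix (by simp; omega)) hrot'.asymm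
  · have hrot := hu.lt_drop_append_take hj0 hjn
    have hgt' := append_lt_append_of_length_eq_s12 (s := u.take j) (t := u.drop (u.length - j)) hgt
      (by simp)
    rw [take_append_drop] at hgt'
    exact absurd hgt' hrot.asymm

theorem IsLyndon.append_singleton_of_lt {a b : ℕ} {v : List ℕ} (hu : IsLyndon (a :: v))
    (hab : a < b) :
    IsLyndon (a :: v ++ [b]) := by
  refine ⟨by simp, fun j hj0 hjn => ?_⟩
  set u := a :: v
  rw [length_append, length_singleton] at hjn
  rcases (Nat.lt_succ_iff.mp hjn).eq_or_lt with rfl | hjlt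
  · rw [rotate_append_length_eq]
    exact .rel hab
  · rw [rotate_eq_drop_append_take (by simp; omega), drop_append_of_le_length hjlt.le,
      take_append_of_le_length hjlt.le]
    calc u ++ [b] = u.take (u.length - j) ++ (u.drop (u.length - j) ++ [b]) := by
          rw [← append_assoc, take_append_drop]
      _ < u.drop j ++ ([b] ++ u.take j) :=
          append_lt_append_of_length_eq_s12 (hu.take_lt_drop hj0 hjlt) (by simp)
      _ = u.drop j ++ [b] ++ u.take j := (append_assoc ..).symm

theorem IsLyndon.isNecklace_s12 {u : List ℕ} (hu : IsLyndon u) : IsNecklace u := by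
  intro i
  rw [← rotate_mod]
  rcases (i % u.length).eq_zero_or_pos with h | h
  · rw [h, rotate_zero]
  · exact (hu.2 _ h (Nat.mod_lt _ (length_pos_iff.mpr hu.1))).le

theorem IsNecklace.head_le {a x : ℕ} {v : List ℕ} (hu : IsNecklace (a :: v)) (hx : x ∈ a :: v) :
    a ≤ x := by
  obtain ⟨j, hj, rfl⟩ := getElem_of_mem hx
  have h := hu j
  rw [rotate_eq_drop_append_take hj.le, drop_eq_getElem_cons hj, cons_append,
    cons_le_cons_iff_of_linearOrder] at h
  rcases h with h | ⟨h, -⟩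
  · exact h.le
  · exact h.le

theorem forall_eq_zero_of_append_zero_le_cons_zero {u : List ℕ} (h : u ++ [0] ≤ 0 :: u) :
    ∀ x ∈ u, x = 0 := by
  induction u with
  | nil => simp
  | cons a v ih =>
    rw [cons_append, cons_le_cons_iff_of_linearOrder] at h
    obtain ⟨rfl, hv⟩ : a = 0 ∧ v ++ [0] ≤ 0 :: v := by
      rcases h with h | h
      · exact absurd h (Nat.not_lt_zero a)
      · exact ⟨h.1, h.1 ▸ h.2⟩
    simpa using ih hv

theorem IsNecklace.forall_eq_zero_of_append_zero {u : List ℕ} (hu : IsNecklace (u ++ [0])) :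
    ∀ x ∈ u, x = 0 := by
  have h := hu u.length
  rw [rotate_append_length_eq] at h
  exact forall_eq_zero_of_append_zero_le_cons_zero h

def HasContent (k : ℕ) (c : Fin k → ℕ) (w : List ℕ) : Prop :=
  (∀ a ∈ w, a < k) ∧ ∀ i : Fin k, w.count i.val = c i

theorem Lk_eq_ncard (k : ℕ) (c : Fin k → ℕ) :
    Lk k c = {w | HasContent k c w ∧ IsLyndon w}.ncard := by
  simp only [Lk, HasContent, and_assoc]

theorem HasContent.mem {k : ℕ} {c : Fin k → ℕ} {w : List ℕ} (hw : HasContent k c w) {i : Fin k}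
    (hi : 1 ≤ c i) : i.val ∈ w :=
  count_pos_iff.mp (hw.2 i ▸ hi)

theorem hasContent_append_singleton_iff {k : ℕ} {c : Fin k → ℕ} {i : Fin k} (hi : 1 ≤ c i)
    {u : List ℕ} :
    HasContent k c (u ++ [i.val]) ↔ HasContent k (Function.update c i (c i - 1)) u := by
  simp only [HasContent, mem_append, mem_singleton, count_append, count_singleton]
  refine and_congr ⟨fun h a ha => h a (.inl ha), fun h a => ?_⟩ (forall_congr' fun j => ?_)
  · rintro (ha | rfl)
    exacts [h a ha, i.isLt]
  · rcases eq_or_ne j i with rfl | hji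
    · rw [Function.update_self]
      simp only [beq_self_eq_true, if_true]
      omega
    · simp [Function.update_of_ne hji, Fin.val_ne_of_ne hji.symm]

theorem finite_setOf_hasContent (k : ℕ) (c : Fin k → ℕ) : {w | HasContent k c w}.Finite := by
  rcases Set.eq_empty_or_nonempty {w | HasContent k c w} with h | ⟨w₀, hw₀⟩
  · simp [h]
  refine w₀.permutations.toFinset.finite_toSet.subset fun w hw => ?_
  simp only [Finset.mem_coe, mem_toFinset, mem_permutations, perm_iff_count]
  intro a
  by_cases ha : a < k
  · exact (hw.2 ⟨a, ha⟩).trans (hw₀.2 ⟨a, ha⟩).symm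
  · rw [count_eq_zero.mpr fun h => ha (hw.1 a h), count_eq_zero.mpr fun h => ha (hw₀.1 a h)]

theorem setOf_stable_eq_biUnion {k : ℕ} (hk : 2 ≤ k) {c : Fin k → ℕ} (hc : ∀ i, 1 ≤ c i) :
    {w | HasContent k c w ∧ IsNecklace w ∧ IsLyndon w.dropLast} =
      ⋃ i ∈ Finset.univ.filter (fun i : Fin k => i ≠ ⟨0, Nat.zero_lt_of_lt hk⟩),
        (· ++ [i.val]) '' {u | HasContent k (Function.update c i (c i - 1)) u ∧ IsLyndon u} := by
  ext w
  simp only [Set.mem_iUnion, Set.mem_image, Finset.mem_filter, Finset.mem_univ, true_and]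
  constructor
  · rintro ⟨hw, hneck, hlyn⟩
    rcases w.eq_nil_or_concat' with rfl | ⟨u, b, rfl⟩
    · exact absurd (hw.mem (hc ⟨0, Nat.zero_lt_of_lt hk⟩)) not_mem_nil
    have hb : b ≠ 0 := by
      rintro rfl
      have h1 : 1 ∈ u ++ [0] := hw.mem (i := ⟨1, hk⟩) (hc _)
      rw [mem_append, mem_singleton] at h1
      exact h1.elim (fun h => one_ne_zero (hneck.forall_eq_zero_of_append_zero 1 h)) one_ne_zero
    refine ⟨⟨b, hw.1 b (by simp)⟩, fun h => hb (congrArg Fin.val h), u,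
      ⟨(hasContent_append_singleton_iff (hc _)).mp hw, ?_⟩, rfl⟩
    rwa [dropLast_concat] at hlyn
  · rintro ⟨i, hi0, u, ⟨hu, hlyn⟩, rfl⟩
    obtain ⟨a, v, rfl⟩ := exists_cons_of_ne_nil hlyn.1
    have h0 : 0 ∈ a :: v := hu.mem (i := ⟨0, Nat.zero_lt_of_lt hk⟩) (by
      rw [Function.update_of_ne (Ne.symm hi0)]
      exact hc _)
    have ha : a = 0 := Nat.le_zero.mp (hlyn.isNecklace_s12.head_le h0)
    have hlyn' := hlyn.append_singleton_of_lt (b := i.val)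
      (ha ▸ Nat.pos_of_ne_zero fun h => hi0 (Fin.ext h))
    exact ⟨(hasContent_append_singleton_iff (hc i)).mpr hu, hlyn'.isNecklace_s12,
      by rwa [dropLast_concat]⟩

/-- The number of stable necklaces with fixed content. -/
theorem stable_necklace_count (k : ℕ) (hk : 2 ≤ k) (c : Fin k → ℕ) (hc : ∀ i, 1 ≤ c i) :
    {w : List ℕ | (∀ a ∈ w, a < k) ∧ (∀ i : Fin k, w.count i.val = c i) ∧
        IsNecklace w ∧ IsLyndon w.dropLast}.ncard =
      ∑ i ∈ Finset.univ.filter (fun i : Fin k => i ≠ ⟨0, by omega⟩),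
        Lk k (Function.update c i (c i - 1)) := by
  set F := Finset.univ.filter (fun i : Fin k => i ≠ ⟨0, by omega⟩)
  set T := fun i : Fin k => {u | HasContent k (Function.update c i (c i - 1)) u ∧ IsLyndon u}
  have hdisj : (F : Set (Fin k)).PairwiseDisjoint fun i => (· ++ [i.val]) '' T i := by
    rintro i - j - hij
    refine Set.disjoint_left.mpr ?_
    rintro _ ⟨u, -, rfl⟩ ⟨v, -, h⟩
    exact hij (Fin.ext (by simpa using (append_inj' h rfl).2.symm))
  calc _ = (⋃ i ∈ F, (· ++ [i.val]) '' T i).ncard := by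
        rw [← setOf_stable_eq_biUnion hk hc]
        simp only [HasContent, and_assoc]
    _ = ∑ i ∈ F, (T i).ncard := by
        have h := F.finite_toSet.ncard_biUnion
          (fun i _ => ((finite_setOf_hasContent k _).subset fun _ h => h.1).image _) hdisj
        rw [finsum_mem_coe_finset] at h
        simpa only [Finset.mem_coe, Set.ncard_image_of_injective _ (append_left_injective _)]
          using h
    _ = _ := Finset.sum_congr rfl fun i _ => (Lk_eq_ncard k _).symm
end

section
/- If d ∈ {1, 2, n−2, n−1} and 0 < d < n with (n,d) ≠ (2,1), then N(n,d) = L(n−1,d) + L(n−1,d−1). -/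
/-!
A binary word in which one letter (the minority letter) occurs once or twice is determined by the
lengths of the runs of the other letter between its occurrences, and comparing such a word with one
of its rotations only involves these runs: when the minority letter is `1` the word with the longer
leading run of `0`s is smaller, when it is `0` a rotation that starts with `1` is larger. This gives
all necklaces and Lyndon words of densities `1`, `2`, `n - 2`, `n - 1` explicitly:
`0ⁿ⁻¹1` and `01ⁿ⁻¹`, `0ᵃ10ᵇ1` with `b ≤ a` and `01ᵇ01ᶜ` with `b ≤ c`, the Lyndon words being those
with strict inequality. Hence `N(n, 2) = N(n, n - 2) = ⌊(n - 2)/2⌋ + 1`, `L(m, 2) = L(m, m - 2) =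
⌊(m - 1)/2⌋`, `L(m, 1) = L(m, m - 1) = 1` and `L(m, 0) = L(m, m) = 0` for `m ≥ 2`, and the identity
becomes arithmetic.
-/

open List

namespace List

variable {s t a b : ℕ} {w : List ℕ}

theorem replicate_append_lt_replicate_append_cons (hst : s < t) (hba : b < a) (x y : List ℕ) :
    replicate a s ++ x < replicate b s ++ t :: y := by
  induction b generalizing a with
  | zero =>
    cases a with
    | zero => omega
    | succ a => exact Lex.rel hst
  | succ b ih =>
    cases a with
    | zero => omega
    | succ a => exact Lex.cons (ih (by omega))

theorem replicate_append_cons_lt_replicate_append (hts : t < s) (hab : a < b) (x y : List ℕ) :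
    replicate a s ++ t :: x < replicate b s ++ y := by
  induction a generalizing b with
  | zero =>
    cases b with
    | zero => omega
    | succ b => exact Lex.rel hts
  | succ a ih =>
    cases b with
    | zero => omega
    | succ b => exact Lex.cons (ih (by omega))

theorem replicate_append_cons_inj (hst : s ≠ t) {a' : ℕ} {u u' : List ℕ}
    (h : replicate a s ++ t :: u = replicate a' s ++ t :: u') : a = a' := by
  induction a generalizing a' with
  | zero => cases a' <;> simp_all [replicate_succ, eq_comm]
  | succ a ih => cases a' <;> simp_all [replicate_succ]

theorem rotate_eq_of_eq_append {x y : List ℕ} {i : ℕ} (h : w = x ++ y) (hi : x.length = i) :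
    w.rotate i = y ++ x := by
  subst h hi
  exact rotate_append_length_eq x y

theorem eq_replicate_of_count_eq_zero (hw : ∀ x ∈ w, x = s ∨ x = t) (h : w.count t = 0) :
    w = replicate w.length s :=
  eq_replicate_iff.2 ⟨rfl, fun x hx =>
    (hw x hx).resolve_right fun hxt => count_eq_zero.1 h (hxt ▸ hx)⟩

theorem exists_eq_replicate_append_cons (hw : ∀ x ∈ w, x = s ∨ x = t) (h : 0 < w.count t) :
    ∃ a u, w = replicate a s ++ t :: u := by
  induction w with
  | nil => simp at h
  | cons x w ih =>
    by_cases hxt : x = t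
    · exact ⟨0, w, by rw [hxt]; rfl⟩
    obtain rfl : x = s := (hw x mem_cons_self).resolve_right hxt
    obtain ⟨a, u, rfl⟩ := ih (fun y hy => hw y (mem_cons_of_mem _ hy))
      (by rwa [count_cons_of_ne hxt] at h)
    exact ⟨a + 1, u, rfl⟩

theorem exists_eq_of_count_eq_one (hst : s ≠ t) (hw : ∀ x ∈ w, x = s ∨ x = t)
    (h : w.count t = 1) : ∃ a b, w = replicate a s ++ t :: replicate b s := by
  obtain ⟨a, u, rfl⟩ := exists_eq_replicate_append_cons hw (by omega)
  have hu : u.count t = 0 := by simpa [count_replicate, hst] using h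
  exact ⟨a, u.length, by
    rw [← eq_replicate_of_count_eq_zero (fun x hx => hw x (by simp [hx])) hu]⟩

theorem exists_eq_of_count_eq_two (hst : s ≠ t) (hw : ∀ x ∈ w, x = s ∨ x = t)
    (h : w.count t = 2) :
    ∃ a b c, w = replicate a s ++ t :: (replicate b s ++ t :: replicate c s) := by
  obtain ⟨a, u, rfl⟩ := exists_eq_replicate_append_cons hw (by omega)
  have hu : u.count t = 1 := by simpa [count_replicate, hst] using h
  obtain ⟨b, c, rfl⟩ := exists_eq_of_count_eq_one hst (fun x hx => hw x (by simp [hx])) hu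
  exact ⟨a, b, c, rfl⟩

theorem count_zero_add_count_one (hw : ∀ x ∈ w, x < 2) : w.count 0 + w.count 1 = w.length := by
  induction w with
  | nil => rfl
  | cons x w ih =>
    have := ih fun y hy => hw y (mem_cons_of_mem _ hy)
    have := hw x mem_cons_self
    interval_cases x <;> simp <;> omega

end List

section Rotations

variable {w : List ℕ}

theorem isNecklace_iff_forall_pos_lt_length :
    IsNecklace w ↔ ∀ i, 0 < i → i < w.length → w ≤ w.rotate i := by
  refine ⟨fun h i _ _ => h i, fun h i => ?_⟩
  rcases eq_or_ne w [] with rfl | hw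
  · simp
  rw [← rotate_mod]
  rcases Nat.eq_zero_or_pos (i % w.length) with hi | hi
  · rw [hi, rotate_zero]
  · exact h _ hi (Nat.mod_lt _ (length_pos_iff.2 hw))

theorem IsLyndon.isNecklace_s14 (h : IsLyndon w) : IsNecklace w :=
  isNecklace_iff_forall_pos_lt_length.2 fun i hi0 hi => (h.2 i hi0 hi).le

theorem IsNecklace.not_rotate_lt (h : IsNecklace w) (i : ℕ) : ¬w.rotate i < w :=
  not_lt_of_ge (h i)

theorem not_isLyndon_of_rotate_eq_self {i : ℕ} (hi0 : 0 < i) (hi : i < w.length)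
    (h : w.rotate i = w) : ¬IsLyndon w :=
  fun hw => (hw.2 i hi0 hi).ne h.symm

theorem not_isLyndon_of_count_eq_zero {s t : ℕ} (hw : ∀ x ∈ w, x = s ∨ x = t)
    (hc : w.count t = 0) (hl : 2 ≤ w.length) : ¬IsLyndon w := by
  rw [eq_replicate_of_count_eq_zero hw hc]
  exact not_isLyndon_of_rotate_eq_self one_pos (by simp; omega) (rotate_replicate s _ 1)

theorem lt_rotate_of_eq_append_one {u x y : List ℕ} {i : ℕ} (h : 0 :: u = x ++ 1 :: y)
    (hi : x.length = i) : 0 :: u < (0 :: u).rotate i := by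
  rw [rotate_eq_of_eq_append h hi]
  exact Lex.rel one_pos

end Rotations

section Shapes

variable {a b c : ℕ}

theorem isLyndon_zeros_one : IsLyndon (replicate a 0 ++ [1]) := by
  refine ⟨by simp, fun i hi0 hi => ?_⟩
  obtain ⟨j, rfl⟩ := Nat.exists_eq_add_of_le (show i ≤ a by simpa using hi)
  rw [rotate_eq_of_eq_append (x := replicate i 0) (by rw [replicate_add, append_assoc]) (by simp)]
  simpa using replicate_append_lt_replicate_append_cons one_pos (by omega : j < i + j) [1]
    (replicate i 0)

theorem isNecklace_zeros_one_zeros_iff :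
    IsNecklace (replicate a 0 ++ 1 :: replicate b 0) ↔ b = 0 := by
  refine ⟨fun h => ?_, by rintro rfl; exact isLyndon_zeros_one.isNecklace_s14⟩
  by_contra hb
  refine h.not_rotate_lt (a + 1) ?_
  rw [rotate_eq_of_eq_append (x := replicate a 0 ++ [1]) (y := replicate b 0) (by simp) (by simp),
    ← append_assoc, ← replicate_add]
  exact replicate_append_lt_replicate_append_cons one_pos (by omega) _ _

theorem isLyndon_zeros_one_zeros_iff :
    IsLyndon (replicate a 0 ++ 1 :: replicate b 0) ↔ b = 0 :=
  ⟨fun h => isNecklace_zeros_one_zeros_iff.1 h.isNecklace_s14, by rintro rfl; exact isLyndon_zeros_one⟩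

theorem isLyndon_zero_ones : IsLyndon (0 :: replicate b 1) := by
  refine ⟨by simp, fun i hi0 hi => ?_⟩
  obtain ⟨i, rfl⟩ : ∃ i', i = i' + 1 := ⟨i - 1, by omega⟩
  obtain ⟨j, rfl⟩ := Nat.exists_eq_add_of_lt (show i < b by simp at hi; omega)
  exact lt_rotate_of_eq_append_one (x := 0 :: replicate i 1) (y := replicate j 1)
    (by rw [add_assoc, replicate_add, replicate_succ]; rfl) (by simp)

theorem isNecklace_ones_zero_ones_iff :
    IsNecklace (replicate a 1 ++ 0 :: replicate b 1) ↔ a = 0 := by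
  refine ⟨fun h => ?_, by rintro rfl; exact isLyndon_zero_ones.isNecklace_s14⟩
  by_contra ha
  refine h.not_rotate_lt a ?_
  rw [rotate_eq_of_eq_append rfl (by simp)]
  exact replicate_append_cons_lt_replicate_append (a := 0) one_pos (by omega) _ _

theorem isLyndon_ones_zero_ones_iff :
    IsLyndon (replicate a 1 ++ 0 :: replicate b 1) ↔ a = 0 :=
  ⟨fun h => isNecklace_ones_zero_ones_iff.1 h.isNecklace_s14, by rintro rfl; exact isLyndon_zero_ones⟩

theorem lt_rotate_or_rotate_eq_zeros_one_zeros_one (hba : b ≤ a) {i : ℕ} (hi0 : 0 < i)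
    (hi : i < a + b + 2) :
    replicate a 0 ++ 1 :: (replicate b 0 ++ [1]) <
        (replicate a 0 ++ 1 :: (replicate b 0 ++ [1])).rotate i ∨
      b = a ∧ (replicate a 0 ++ 1 :: (replicate b 0 ++ [1])).rotate i =
        replicate a 0 ++ 1 :: (replicate b 0 ++ [1]) := by
  rcases Nat.lt_or_ge i (a + 1) with hia | hia
  · obtain ⟨j, rfl⟩ := Nat.exists_eq_add_of_le (show i ≤ a by omega)
    left
    rw [rotate_eq_of_eq_append (x := replicate i 0) (by rw [replicate_add, append_assoc])
      (by simp), append_assoc, cons_append]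
    exact replicate_append_lt_replicate_append_cons one_pos (by omega) _ _
  · obtain ⟨k, rfl⟩ := Nat.exists_eq_add_of_le hia
    obtain ⟨l, rfl⟩ := Nat.exists_eq_add_of_le (show k ≤ b by omega)
    rw [rotate_eq_of_eq_append (x := replicate a 0 ++ 1 :: replicate k 0)
      (y := replicate l 0 ++ [1]) (by rw [replicate_add]; simp only [append_assoc, cons_append])
      (by simp; omega), append_assoc, cons_append, nil_append]
    rcases Nat.lt_or_ge l a with hla | hla
    · exact .inl (replicate_append_lt_replicate_append_cons one_pos hla _ _)
    · obtain rfl : k = 0 := by omega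
      obtain rfl : l = a := by omega
      exact .inr ⟨by omega, by simp⟩

theorem isNecklace_zeros_one_zeros_one_zeros_iff :
    IsNecklace (replicate a 0 ++ 1 :: (replicate b 0 ++ 1 :: replicate c 0)) ↔ c = 0 ∧ b ≤ a := by
  constructor
  · intro h
    have hc : c = 0 := by
      by_contra hc
      refine h.not_rotate_lt (a + b + 2) ?_
      rw [rotate_eq_of_eq_append (x := replicate a 0 ++ 1 :: (replicate b 0 ++ [1]))
        (y := replicate c 0) (by simp) (by simp; omega), ← append_assoc, ← replicate_add]
      exact replicate_append_lt_replicate_append_cons one_pos (by omega) _ _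
    subst hc
    refine ⟨rfl, not_lt.1 fun hab => h.not_rotate_lt (a + 1) ?_⟩
    rw [rotate_eq_of_eq_append (x := replicate a 0 ++ [1]) (y := replicate b 0 ++ [1]) (by simp)
      (by simp), append_assoc, cons_append, nil_append]
    exact replicate_append_lt_replicate_append_cons one_pos hab _ _
  · rintro ⟨rfl, hba⟩
    refine isNecklace_iff_forall_pos_lt_length.2 fun i hi0 hi => ?_
    rcases lt_rotate_or_rotate_eq_zeros_one_zeros_one hba hi0 (by simp at hi; omega) with
      h | ⟨-, h⟩
    · exact h.le
    · exact h.ge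

theorem isLyndon_zeros_one_zeros_one_zeros_iff :
    IsLyndon (replicate a 0 ++ 1 :: (replicate b 0 ++ 1 :: replicate c 0)) ↔ c = 0 ∧ b < a := by
  constructor
  · intro h
    obtain ⟨rfl, hba⟩ := isNecklace_zeros_one_zeros_one_zeros_iff.1 h.isNecklace_s14
    refine ⟨rfl, hba.lt_of_ne fun hab => ?_⟩
    subst hab
    refine not_isLyndon_of_rotate_eq_self (i := b + 1) (by omega) (by simp) ?_ h
    rw [rotate_eq_of_eq_append (x := replicate b 0 ++ [1]) (y := replicate b 0 ++ [1]) (by simp)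
      (by simp)]
    simp
  · rintro ⟨rfl, hba⟩
    exact ⟨by simp, fun i hi0 hi =>
      (lt_rotate_or_rotate_eq_zeros_one_zeros_one hba.le hi0 (by simp at hi; omega)).resolve_right
        fun h => hba.ne h.1⟩

theorem lt_rotate_or_rotate_eq_zero_ones_zero_ones (hbc : b ≤ c) {i : ℕ} (hi0 : 0 < i)
    (hi : i < b + c + 2) :
    0 :: (replicate b 1 ++ 0 :: replicate c 1) <
        (0 :: (replicate b 1 ++ 0 :: replicate c 1)).rotate i ∨
      b = c ∧ (0 :: (replicate b 1 ++ 0 :: replicate c 1)).rotate i =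
        0 :: (replicate b 1 ++ 0 :: replicate c 1) := by
  rcases Nat.lt_or_ge i (b + 1) with hib | hib
  · obtain ⟨i, rfl⟩ : ∃ i', i = i' + 1 := ⟨i - 1, by omega⟩
    obtain ⟨j, rfl⟩ := Nat.exists_eq_add_of_lt (show i < b by omega)
    refine .inl (lt_rotate_of_eq_append_one (x := 0 :: replicate i 1)
      (y := replicate j 1 ++ 0 :: replicate c 1) ?_ (by simp))
    rw [add_assoc, replicate_add, replicate_succ]
    simp only [append_assoc, cons_append]
  rcases Nat.lt_or_ge i (b + 2) with hib' | hib'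
  · obtain rfl : i = b + 1 := by omega
    rw [rotate_eq_of_eq_append (x := 0 :: replicate b 1) (y := 0 :: replicate c 1) (by simp)
      (by simp)]
    rcases Nat.lt_or_ge b c with hbc' | hcb
    · exact .inl (Lex.cons (replicate_append_cons_lt_replicate_append one_pos hbc' _ _))
    · obtain rfl : b = c := by omega
      exact .inr ⟨rfl, rfl⟩
  · obtain ⟨k, rfl⟩ := Nat.exists_eq_add_of_le hib'
    obtain ⟨j, rfl⟩ := Nat.exists_eq_add_of_lt (show k < c by omega)
    refine .inl (lt_rotate_of_eq_append_one
      (x := 0 :: (replicate b 1 ++ 0 :: replicate k 1)) (y := replicate j 1) ?_ (by simp; omega))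
    rw [add_assoc, replicate_add, replicate_succ]
    simp only [append_assoc, cons_append]

theorem isNecklace_ones_zero_ones_zero_ones_iff :
    IsNecklace (replicate a 1 ++ 0 :: (replicate b 1 ++ 0 :: replicate c 1)) ↔ a = 0 ∧ b ≤ c := by
  constructor
  · intro h
    have ha : a = 0 := by
      by_contra ha
      refine h.not_rotate_lt a ?_
      rw [rotate_eq_of_eq_append rfl (by simp)]
      exact replicate_append_cons_lt_replicate_append (a := 0) one_pos (by omega) _ _
    subst ha
    refine ⟨rfl, not_lt.1 fun hcb => h.not_rotate_lt (b + 1) ?_⟩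
    rw [rotate_eq_of_eq_append (x := 0 :: replicate b 1) (y := 0 :: replicate c 1) (by simp)
      (by simp)]
    exact Lex.cons (replicate_append_cons_lt_replicate_append one_pos hcb _ _)
  · rintro ⟨rfl, hbc⟩
    refine isNecklace_iff_forall_pos_lt_length.2 fun i hi0 hi => ?_
    rcases lt_rotate_or_rotate_eq_zero_ones_zero_ones hbc hi0 (by simp at hi; omega) with
      h | ⟨-, h⟩
    · exact h.le
    · exact h.ge

theorem isLyndon_ones_zero_ones_zero_ones_iff :
    IsLyndon (replicate a 1 ++ 0 :: (replicate b 1 ++ 0 :: replicate c 1)) ↔ a = 0 ∧ b < c := by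
  constructor
  · intro h
    obtain ⟨rfl, hbc⟩ := isNecklace_ones_zero_ones_zero_ones_iff.1 h.isNecklace_s14
    refine ⟨rfl, hbc.lt_of_ne fun hbc => ?_⟩
    subst hbc
    exact not_isLyndon_of_rotate_eq_self (i := b + 1) (by omega) (by simp)
      (rotate_eq_of_eq_append (x := 0 :: replicate b 1) (y := 0 :: replicate b 1) rfl (by simp)) h
  · rintro ⟨rfl, hbc⟩
    exact ⟨by simp, fun i hi0 hi =>
      (lt_rotate_or_rotate_eq_zero_ones_zero_ones hbc.le hi0 (by simp at hi; omega)).resolve_right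
        fun h => hbc.ne h.1⟩

end Shapes

section Counting

variable {n m k : ℕ}

theorem ncard_setOf_count_one_eq_one {P : List ℕ → Prop} (hn : 0 < n)
    (hP : ∀ a b, P (replicate a 0 ++ 1 :: replicate b 0) ↔ b = 0) :
    {w : List ℕ | w.length = n ∧ (∀ x ∈ w, x < 2) ∧ w.count 1 = 1 ∧ P w}.ncard = 1 := by
  refine Set.ncard_eq_one.2 ⟨replicate (n - 1) 0 ++ [1], Set.ext fun w => ⟨?_, ?_⟩⟩
  · rintro ⟨hl, hw, hc, h⟩
    obtain ⟨a, b, rfl⟩ := exists_eq_of_count_eq_one zero_ne_one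
      (fun x hx => by have := hw x hx; omega) hc
    obtain rfl := (hP a b).1 h
    simp only [length_append, length_replicate, length_cons] at hl
    simp [← hl]
  · rintro rfl
    exact ⟨by simp; omega, fun x hx => by simp at hx; omega, by simp [count_replicate],
      (hP _ 0).2 rfl⟩

theorem ncard_setOf_count_one_eq_sub_one {P : List ℕ → Prop} (hn : 0 < n)
    (hP : ∀ a b, P (replicate a 1 ++ 0 :: replicate b 1) ↔ a = 0) :
    {w : List ℕ | w.length = n ∧ (∀ x ∈ w, x < 2) ∧ w.count 1 = n - 1 ∧ P w}.ncard = 1 := by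
  refine Set.ncard_eq_one.2 ⟨0 :: replicate (n - 1) 1, Set.ext fun w => ⟨?_, ?_⟩⟩
  · rintro ⟨hl, hw, hc, h⟩
    have := count_zero_add_count_one hw
    obtain ⟨a, b, rfl⟩ := exists_eq_of_count_eq_one one_ne_zero
      (fun x hx => by have := hw x hx; omega) (by omega)
    obtain rfl := (hP a b).1 h
    simp only [length_append, length_replicate, length_cons] at hl
    simp [← hl]
  · rintro rfl
    exact ⟨by simp; omega, fun x hx => by simp at hx; omega, by simp, (hP 0 _).2 rfl⟩

theorem ncard_setOf_count_one_eq_two {P : List ℕ → Prop} (hn : 2 ≤ n) (hk : k < n)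
    (hP : ∀ a b c, a + b + c = n - 2 →
      (P (replicate a 0 ++ 1 :: (replicate b 0 ++ 1 :: replicate c 0)) ↔ c = 0 ∧ b < k)) :
    {w : List ℕ | w.length = n ∧ (∀ x ∈ w, x < 2) ∧ w.count 1 = 2 ∧ P w}.ncard = k := by
  have : {w : List ℕ | w.length = n ∧ (∀ x ∈ w, x < 2) ∧ w.count 1 = 2 ∧ P w} =
      (fun b => replicate (n - 2 - b) 0 ++ 1 :: (replicate b 0 ++ [1])) '' Set.Iio k := by
    ext w
    refine ⟨fun ⟨hl, hw, hc, h⟩ => ?_, ?_⟩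
    · obtain ⟨a, b, c, rfl⟩ := exists_eq_of_count_eq_two zero_ne_one
        (fun x hx => by have := hw x hx; omega) hc
      simp only [length_append, length_replicate, length_cons] at hl
      obtain ⟨rfl, hb⟩ := (hP a b c (by omega)).1 h
      exact ⟨b, hb, by simp; omega⟩
    · rintro ⟨b, hb, rfl⟩
      exact ⟨by simp at hb ⊢; omega, fun x hx => by simp at hx; omega, by simp [count_replicate],
        (hP _ _ 0 (by simp at hb; omega)).2 ⟨rfl, hb⟩⟩
  rw [this, Set.InjOn.ncard_image fun b hb b' hb' h => ?_]
  · simp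
  · have := replicate_append_cons_inj zero_ne_one h
    simp only [Set.mem_Iio] at hb hb'
    omega

theorem ncard_setOf_count_one_eq_sub_two {P : List ℕ → Prop} (hn : 2 ≤ n) (hk : k < n)
    (hP : ∀ a b c, a + b + c = n - 2 →
      (P (replicate a 1 ++ 0 :: (replicate b 1 ++ 0 :: replicate c 1)) ↔ a = 0 ∧ b < k)) :
    {w : List ℕ | w.length = n ∧ (∀ x ∈ w, x < 2) ∧ w.count 1 = n - 2 ∧ P w}.ncard = k := by
  have : {w : List ℕ | w.length = n ∧ (∀ x ∈ w, x < 2) ∧ w.count 1 = n - 2 ∧ P w} =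
      (fun b => 0 :: (replicate b 1 ++ 0 :: replicate (n - 2 - b) 1)) '' Set.Iio k := by
    ext w
    refine ⟨fun ⟨hl, hw, hc, h⟩ => ?_, ?_⟩
    · have := count_zero_add_count_one hw
      obtain ⟨a, b, c, rfl⟩ := exists_eq_of_count_eq_two one_ne_zero
        (fun x hx => by have := hw x hx; omega) (by omega)
      simp only [length_append, length_replicate, length_cons] at hl
      obtain ⟨rfl, hb⟩ := (hP a b c (by omega)).1 h
      exact ⟨b, hb, by simp; omega⟩
    · rintro ⟨b, hb, rfl⟩
      exact ⟨by simp at hb ⊢; omega, fun x hx => by simp at hx; omega, by simp at hb ⊢; omega,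
        (hP 0 _ _ (by simp at hb; omega)).2 ⟨rfl, hb⟩⟩
  rw [this, Set.InjOn.ncard_image fun b hb b' hb' h => ?_]
  · simp
  · exact replicate_append_cons_inj one_ne_zero (cons_injective h)

theorem N_one (hn : 0 < n) : N n 1 = 1 :=
  ncard_setOf_count_one_eq_one hn fun _ _ => isNecklace_zeros_one_zeros_iff

theorem L_one (hm : 0 < m) : L m 1 = 1 :=
  ncard_setOf_count_one_eq_one hm fun _ _ => isLyndon_zeros_one_zeros_iff

theorem N_sub_one (hn : 0 < n) : N n (n - 1) = 1 :=
  ncard_setOf_count_one_eq_sub_one hn fun _ _ => isNecklace_ones_zero_ones_iff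

theorem L_sub_one (hm : 0 < m) : L m (m - 1) = 1 :=
  ncard_setOf_count_one_eq_sub_one hm fun _ _ => isLyndon_ones_zero_ones_iff

theorem N_two (hn : 2 ≤ n) : N n 2 = (n - 2) / 2 + 1 :=
  ncard_setOf_count_one_eq_two hn (by omega) fun _ _ _ h => by
    rw [isNecklace_zeros_one_zeros_one_zeros_iff]; omega

theorem L_two (hm : 2 ≤ m) : L m 2 = (m - 1) / 2 :=
  ncard_setOf_count_one_eq_two hm (by omega) fun _ _ _ h => by
    rw [isLyndon_zeros_one_zeros_one_zeros_iff]; omega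

theorem N_sub_two (hn : 2 ≤ n) : N n (n - 2) = (n - 2) / 2 + 1 :=
  ncard_setOf_count_one_eq_sub_two hn (by omega) fun _ _ _ h => by
    rw [isNecklace_ones_zero_ones_zero_ones_iff]; omega

theorem L_sub_two (hm : 2 ≤ m) : L m (m - 2) = (m - 1) / 2 :=
  ncard_setOf_count_one_eq_sub_two hm (by omega) fun _ _ _ h => by
    rw [isLyndon_ones_zero_ones_zero_ones_iff]; omega

theorem L_zero (hm : 2 ≤ m) : L m 0 = 0 := by
  have : ∀ w : List ℕ, ¬(w.length = m ∧ (∀ x ∈ w, x < 2) ∧ w.count 1 = 0 ∧ IsLyndon w) :=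
    fun w ⟨hl, hw, hc, h⟩ => not_isLyndon_of_count_eq_zero (s := 0)
      (fun x hx => by have := hw x hx; omega) hc (hl ▸ hm) h
  simp only [L, this, Set.ofPred_false, Set.ncard_empty]

theorem L_self (hm : 2 ≤ m) : L m m = 0 := by
  have : ∀ w : List ℕ, ¬(w.length = m ∧ (∀ x ∈ w, x < 2) ∧ w.count 1 = m ∧ IsLyndon w) := by
    rintro w ⟨hl, hw, hc, h⟩
    have := count_zero_add_count_one hw
    exact not_isLyndon_of_count_eq_zero (s := 1) (t := 0)
      (fun x hx => by have := hw x hx; omega) (by omega) (hl ▸ hm) h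
  simp only [L, this, Set.ofPred_false, Set.ncard_empty]

end Counting

/-- Equality in the Pascal-like bound for densities `1, 2, n-2, n-1`. -/
theorem pascal_equality_extremal (n d : ℕ)
    (hd : d ∈ ({1, 2, n - 2, n - 1} : Set ℕ)) (hd0 : 0 < d) (hdn : d < n)
    (hne : (n, d) ≠ (2, 1)) :
    N n d = L (n - 1) d + L (n - 1) (d - 1) := by
  have hn : 3 ≤ n := by
    by_contra
    obtain rfl : n = 2 := by omega
    obtain rfl : d = 1 := by omega
    exact hne rfl
  rcases hd with rfl | rfl | rfl | rfl
  · rw [N_one (by omega), L_one (by omega), L_zero (by omega)]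
  · rw [N_two (by omega), L_two (by omega), L_one (by omega)]
    omega
  · rw [N_sub_two (by omega), show n - 2 = n - 1 - 1 by omega, L_sub_one (by omega),
      show n - 1 - 1 - 1 = n - 1 - 2 by omega, L_sub_two (by omega)]
    omega
  · rw [N_sub_one (by omega), L_self (by omega), L_sub_one (by omega)]
end
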